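/- arXiv:1402.5305 — 10 statements merged into one kernel-verified Lean document; each statement's English description precedes it below -/
import Mathlib

section
/- Suppose that |supp(ρᵢ(t))| = |supp(ρⱼ(t))| for all t ∈ T and all 1 ≤ i, j ≤ r. Then for every natural number k, the number of ordered pairs (s,t) ∈ T × T with d(α(s,I), α(t,I)) = k equals the number of ordered pairs (s,t) ∈ T × T with d(β(s), β(t)) = k, where β(t) : {1,…,r} × Q → Q is the repetition codeword (i,x) ↦ ρ₁(t)(x). Consequently, the twisted permutation code C(T,I) has the same inner distance distribution, and in particular the same minimum distance, as the repetition code Rep_r(C(T,ρ₁)). -/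
/-! The codewords of `s` and `t` differ at `(i, x)` exactly when `x ∈ supp ρᵢ(s⁻¹t)`, so their
distance is `∑ᵢ |supp ρᵢ(s⁻¹t)|`. Under the hypothesis every summand equals `|supp ρ₁(s⁻¹t)|`,
so the twisted and repetition distances agree pair by pair, not just in distribution. -/

theorem hammingDist_uncurry {ι α β : Type*} [Fintype ι] [Fintype α] [DecidableEq β]
    (f g : ι → α → β) :
    hammingDist (fun q : ι × α => f q.1 q.2) (fun q => g q.1 q.2)
      = ∑ i, hammingDist (f i) (g i) := by
  simp only [hammingDist, Finset.card_filter, Fintype.sum_prod_type]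

theorem Equiv.Perm.hammingDist_eq_card_support {α : Type*} [Fintype α] [DecidableEq α]
    (σ τ : Equiv.Perm α) :
    hammingDist ⇑σ ⇑τ = (σ⁻¹ * τ).support.card := by
  rw [hammingDist, Equiv.Perm.support]
  congr 1
  ext x
  simp only [Finset.mem_filter, Finset.mem_univ, true_and, Equiv.Perm.mul_apply, ne_eq,
    Equiv.Perm.inv_eq_iff_eq]
  exact not_congr eq_comm

theorem hammingDist_twisted_eq_sum_card_support {T Q : Type*} [Group T] [Fintype Q]
    [DecidableEq Q] {r : ℕ} (I : Fin r → (T →* Equiv.Perm Q)) (s t : T) :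
    hammingDist (fun q : Fin r × Q => I q.1 s q.2) (fun q => I q.1 t q.2)
      = ∑ i, (I i (s⁻¹ * t)).support.card := by
  rw [hammingDist_uncurry (fun i => ⇑(I i s)) (fun i => ⇑(I i t))]
  simp only [Equiv.Perm.hammingDist_eq_card_support, map_mul, map_inv]

theorem twisted_stmt4_general {T Q : Type*} [Group T] [Fintype Q] [DecidableEq Q]
    {r : ℕ} (hr : 0 < r) (I : Fin r → (T →* Equiv.Perm Q))
    (hsupp : ∀ t : T, ∀ i j : Fin r, ((I i) t).support.card = ((I j) t).support.card) :
    ∀ k : ℕ,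
      Nat.card {p : T × T |
          hammingDist (fun q : Fin r × Q => I q.1 p.1 q.2)
            (fun q : Fin r × Q => I q.1 p.2 q.2) = k}
        = Nat.card {p : T × T |
            hammingDist (fun q : Fin r × Q => I ⟨0, hr⟩ p.1 q.2)
              (fun q : Fin r × Q => I ⟨0, hr⟩ p.2 q.2) = k} := by
  intro k
  have same_dist : ∀ s t : T,
      hammingDist (fun q : Fin r × Q => I q.1 s q.2) (fun q => I q.1 t q.2)
        = hammingDist (fun q : Fin r × Q => I ⟨0, hr⟩ s q.2) (fun q => I ⟨0, hr⟩ t q.2) :=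
    fun s t => by
      rw [hammingDist_twisted_eq_sum_card_support I,
        hammingDist_twisted_eq_sum_card_support (fun _ => I ⟨0, hr⟩)]
      exact Finset.sum_congr rfl fun i _ => hsupp _ i ⟨0, hr⟩
  simp only [same_dist]

/-- If `|supp(ρᵢ t)| = |supp(ρⱼ t)|` for all `t ∈ T` and all `i, j`, then for
every `k` the number of ordered pairs of group elements whose twisted codewords are at
Hamming distance `k` equals the number of ordered pairs whose `r`-fold repetition codewords
(using `ρ₁`) are at Hamming distance `k`; so `C(T,I)` has the same inner distance
distribution (hence the same minimum distance) as `Rep_r(C(T,ρ₁))`. -/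
theorem twisted_stmt4 {T Q : Type*} [Group T] [Fintype T] [Fintype Q] [DecidableEq Q]
    {r : ℕ} (hr : 0 < r) (I : Fin r → (T →* Equiv.Perm Q))
    (hsupp : ∀ t : T, ∀ i j : Fin r, ((I i) t).support.card = ((I j) t).support.card) :
    ∀ k : ℕ,
      Nat.card {p : T × T |
          hammingDist (fun q : Fin r × Q => I q.1 p.1 q.2)
            (fun q : Fin r × Q => I q.1 p.2 q.2) = k}
        = Nat.card {p : T × T |
            hammingDist (fun q : Fin r × Q => I ⟨0, hr⟩ p.1 q.2)
              (fun q : Fin r × Q => I ⟨0, hr⟩ p.2 q.2) = k} :=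
  twisted_stmt4_general hr I hsupp
end

section
/- Let φ be an automorphism of the symmetric group S₆ on six points that is not inner, i.e. there is no g ∈ S₆ with φ(t) = g⁻¹ t g for all t. Then min over all t ∈ S₆ with t ≠ 1 of ( |supp(t)| + |supp(φ(t))| ) equals 8, whereas min over all t ≠ 1 of 2·|supp(t)| equals 4. Hence the twisted permutation code C(S₆,(id,φ)) has minimum distance 8, strictly greater than the minimum distance 4 of the 2-fold repetition permutation code of S₆. -/
/-!
An automorphism `ψ` of `S₆` preserves the sign (the sign is the only surjection onto `ℤˣ`), so
it sends a transposition to an odd involution: a transposition or a product of three disjoint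
transpositions. If transpositions go to transpositions, `ψ` is inner: the transpositions through
a point go to pairwise non-commuting transpositions, which must all share one point. So a
non-inner `ψ`, and likewise `ψ⁻¹`, sends transpositions to fixed-point-free involutions. It also
sends 3-cycles to elements of order 3 that are not 3-cycles, since a 3-cycle commutes with a
disjoint transposition while no fixed-point-free involution commutes with a 3-cycle. Hence if
`t` or `ψ t` moves at most three points, the other moves all six, so
`|supp t| + |supp (ψ t)| ≥ 8`, with equality at `ψ⁻¹` of a transposition.
-/

open Equiv Equiv.Perm
open scoped Finset

theorem MulEquiv.symm_ne_conj {G : Type*} [Group G] {ψ : G ≃* G}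
    (hψ : ∀ g : G, ψ ≠ MulAut.conj g) (g : G) : ψ.symm ≠ MulAut.conj g := by
  intro h
  apply hψ g⁻¹
  ext t
  rw [← MulEquiv.symm_symm ψ, h]
  simp

namespace Equiv.Perm

section Swap

variable {α : Type*} [DecidableEq α]

theorem commute_swap_swap {a b c d : α} (hac : a ≠ c) (had : a ≠ d) (hbc : b ≠ c)
    (hbd : b ≠ d) : Commute (swap a b) (swap c d) := by
  apply Disjoint.commute
  intro x
  by_cases hx : x = a ∨ x = b
  · right
    rcases hx with rfl | rfl <;> exact swap_apply_of_ne_of_ne ‹_› ‹_›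
  · left
    rw [not_or] at hx
    exact swap_apply_of_ne_of_ne hx.1 hx.2

theorem not_commute_swap_swap {a b c : α} (hab : a ≠ b) (hac : a ≠ c) (hbc : b ≠ c) :
    ¬ Commute (swap a b) (swap a c) := by
  intro h
  have := DFunLike.congr_fun h.eq a
  simp only [Perm.mul_apply, swap_apply_left, swap_apply_of_ne_of_ne hab.symm hbc,
    swap_apply_of_ne_of_ne hac.symm hbc.symm] at this
  exact hbc this.symm

theorem exists_swap_eq_of_not_commute {σ τ : Perm α} (hσ : σ.IsSwap) (hτ : τ.IsSwap)
    (h : ¬ Commute σ τ) :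
    ∃ p x y, p ≠ x ∧ p ≠ y ∧ x ≠ y ∧ σ = swap p x ∧ τ = swap p y := by
  obtain ⟨a, b, hab, rfl⟩ := hσ
  obtain ⟨c, d, hcd, rfl⟩ := hτ
  have hne : swap a b ≠ swap c d := fun he => h (he ▸ Commute.refl _)
  by_cases hac : a = c
  · subst hac
    exact ⟨a, b, d, hab, hcd, fun hbd => hne (hbd ▸ rfl), rfl, rfl⟩
  by_cases had : a = d
  · subst had
    exact ⟨a, b, c, hab, hcd.symm, fun hbc => hne (by rw [hbc, swap_comm]), rfl, swap_comm c a⟩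
  by_cases hbc : b = c
  · subst hbc
    exact ⟨b, a, d, hab.symm, hcd, had, swap_comm a b, rfl⟩
  by_cases hbd : b = d
  · subst hbd
    exact ⟨b, a, c, hab.symm, hcd.symm, hac, swap_comm a b, swap_comm c b⟩
  exact absurd (commute_swap_swap hac had hbc hbd) h

theorem exists_swap_eq_of_not_commute_of_ne {p x y : α} {τ : Perm α} (hxy : x ≠ y)
    (hτ : τ.IsSwap) (hx : ¬ Commute (swap p x) τ) (hy : ¬ Commute (swap p y) τ)
    (hne : τ ≠ swap x y) : ∃ z, τ = swap p z := by
  obtain ⟨c, d, hcd, rfl⟩ := hτ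
  by_cases hpc : p = c
  · exact ⟨d, hpc ▸ rfl⟩
  by_cases hpd : p = d
  · exact ⟨c, by rw [hpd, swap_comm]⟩
  have hmem : ∀ w, ¬ Commute (swap p w) (swap c d) → w = c ∨ w = d := fun w hw => by
    by_contra! hw'
    exact hw (commute_swap_swap hpc hpd hw'.1 hw'.2)
  rcases hmem x hx with rfl | rfl <;> rcases hmem y hy with rfl | rfl
  all_goals first | exact absurd rfl hxy | exact absurd (swap_comm _ _) hne | exact absurd rfl hne

theorem mulEquiv_swap_sq (ψ : Perm α ≃* Perm α) (a b : α) : ψ (swap a b) ^ 2 = 1 := by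
  rw [← map_pow, sq, swap_mul_self, map_one]

end Swap

theorem IsCycle.apply_eq_self_of_commute {α : Type*} [Finite α] {u A : Perm α} (hu : u.IsCycle)
    (hodd : Odd (orderOf u)) (hA : A ^ 2 = 1) (hcomm : Commute A u) {x : α} (hx : u x ≠ x) :
    A x = x := by
  have hAx : u (A x) ≠ A x := by
    rw [← Perm.mul_apply, ← hcomm.eq, Perm.mul_apply]
    exact A.injective.ne hx
  obtain ⟨i, hi⟩ := hu.exists_pow_eq hx hAx
  have hAA : A (A x) = x := by rw [← Perm.mul_apply, ← sq, hA, one_apply]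
  have h2i : (u ^ (2 * i)) x = x := by
    rw [pow_mul', pow_two, Perm.mul_apply, hi, ← Perm.mul_apply, ← (hcomm.pow_right i).eq,
      Perm.mul_apply, hi, hAA]
  have hdvd : orderOf u ∣ i :=
    (Nat.Coprime.dvd_of_dvd_mul_left (Nat.coprime_two_right.mpr hodd)
      (orderOf_dvd_of_pow_eq_one ((hu.pow_eq_one_iff' hx).mpr h2i)))
  rw [← hi, orderOf_dvd_iff_pow_eq_one.mp hdvd, one_apply]

section Fintype

variable {α : Type*} [Fintype α] [DecidableEq α]

theorem sign_mulEquiv_apply (ψ : Perm α ≃* Perm α) (σ : Perm α) : sign (ψ σ) = sign σ := by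
  rcases subsingleton_or_nontrivial α
  · rw [Subsingleton.elim (ψ σ) σ]
  · have hsurj : Function.Surjective (sign.comp ψ.toMonoidHom) :=
      (sign_surjective (α := α)).comp ψ.surjective
    exact DFunLike.congr_fun (eq_sign_of_surjective_hom hsurj) σ

theorem sign_of_sq_eq_one {σ : Perm α} (hσ : σ ^ 2 = 1) :
    sign σ = (-1) ^ (#σ.support / 2) := by
  have hct := cycleType_of_pow_prime_eq_one (p := 2) hσ
  rw [sign_of_cycleType, ← sum_cycleType, hct]
  simp only [Multiset.sum_replicate, Multiset.card_replicate, smul_eq_mul]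
  rw [Nat.mul_div_cancel _ two_pos, pow_add, pow_mul', Int.units_sq, one_pow, one_mul]

theorem dvd_card_support_of_pow_prime_eq_one {p : ℕ} [Fact p.Prime] {σ : Perm α}
    (hσ : σ ^ p = 1) : p ∣ #σ.support := by
  rw [← sum_cycleType, cycleType_of_pow_prime_eq_one hσ, Multiset.sum_replicate, smul_eq_mul]
  exact dvd_mul_left _ _

theorem card_support_mulEquiv_swap_eq (ψ : Perm α ≃* Perm α) {a b c d : α} (hab : a ≠ b)
    (hcd : c ≠ d) : #(ψ (swap a b)).support = #(ψ (swap c d)).support := by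
  obtain ⟨g, hg⟩ := isConj_iff.mp (ψ.toMonoidHom.map_isConj (isConj_swap hab hcd))
  rw [← MulEquiv.coe_toMonoidHom, ← hg]
  exact card_support_conj.symm

theorem exists_eq_conj_of_isSwap_map (h3 : 2 < Fintype.card α)
    (ψ : Perm α ≃* Perm α) (hψ : ∀ σ : Perm α, σ.IsSwap → (ψ σ).IsSwap) :
    ∃ g : Perm α, ψ = MulAut.conj g := by
  have hcomm : ∀ σ τ, Commute (ψ σ) (ψ τ) → Commute σ τ := fun σ τ h => by
    simpa using h.map ψ.symm
  obtain ⟨a, b, c, hab, hac, hbc⟩ := Fintype.two_lt_card_iff.mp h3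
  obtain ⟨p, x, y, -, hpy, hxy, hb, hc⟩ := exists_swap_eq_of_not_commute
    (hψ _ ⟨a, b, hab, rfl⟩) (hψ _ ⟨a, c, hac, rfl⟩)
    fun h => not_commute_swap_swap hab hac hbc (hcomm _ _ h)
  -- A third image meeting `swap p x` and `swap p y` but avoiding `p` could only be
  -- `swap x y = ψ (swap b c)`, which is not the image of any `swap a d`.
  have hxy_eq : swap x y = ψ (swap b c) := by
    rw [← swap_mul_swap_mul_swap hac.symm hbc.symm, swap_comm c a, map_mul, map_mul, hb, hc,
      swap_comm p y, swap_mul_swap_mul_swap hpy.symm hxy.symm]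
  have hstar : ∀ d, ∃ z, ψ (swap a d) = swap p z := by
    intro d
    by_cases hda : d = a
    · exact ⟨p, by rw [hda, swap_self, swap_self, ← one_def, map_one]⟩
    by_cases hdb : d = b
    · exact ⟨x, hdb ▸ hb⟩
    by_cases hdc : d = c
    · exact ⟨y, hdc ▸ hc⟩
    refine exists_swap_eq_of_not_commute_of_ne hxy (hψ _ ⟨a, d, Ne.symm hda, rfl⟩) ?_ ?_ ?_
    · rw [← hb]
      exact fun h => not_commute_swap_swap hab (Ne.symm hda) (Ne.symm hdb) (hcomm _ _ h)
    · rw [← hc]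
      exact fun h => not_commute_swap_swap hac (Ne.symm hda) (Ne.symm hdc) (hcomm _ _ h)
    · rw [hxy_eq, Ne, ψ.injective.eq_iff]
      intro h
      have := DFunLike.congr_fun h a
      rw [swap_apply_left, swap_apply_of_ne_of_ne hab hac] at this
      exact hda this
  choose f hf using hstar
  have hinj : Function.Injective f := fun d e hde => by
    have h := DFunLike.congr_fun (ψ.injective ((hf d).trans (hde ▸ (hf e).symm))) a
    rwa [swap_apply_left, swap_apply_left] at h
  set g := Equiv.ofBijective f (Finite.injective_iff_bijective.mp hinj)
  have hfa : f a = p := by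
    have h := hf a
    rw [swap_self, ← one_def, map_one, eq_comm, swap_eq_one_iff] at h
    exact h.symm
  have hstar_conj : ∀ d, ψ (swap a d) = g * swap a d * g⁻¹ := fun d => by
    rw [← swap_apply_apply, hf d, Equiv.ofBijective_apply, Equiv.ofBijective_apply, hfa]
  have hswap_conj : ∀ d e, ψ (swap d e) = g * swap d e * g⁻¹ := fun d e => by
    have h : swap d e = swap a d * swap a (swap a d e) * (swap a d)⁻¹ := by
      rw [← swap_apply_apply, swap_apply_left, swap_apply_self]
    rw [h, map_mul, map_mul, map_inv, hstar_conj, hstar_conj]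
    group
  refine ⟨g, MulEquiv.toMonoidHom_injective
    (MonoidHom.eq_of_eqOn_dense closure_isSwap ?_)⟩
  rintro _ ⟨d, e, -, rfl⟩
  exact hswap_conj d e

end Fintype

theorem card_support_mulEquiv_swap_eq_six {ψ : Perm (Fin 6) ≃* Perm (Fin 6)}
    (hψ : ∀ g, ψ ≠ MulAut.conj g) {a b : Fin 6} (hab : a ≠ b) :
    #(ψ (swap a b)).support = 6 := by
  have hsq := mulEquiv_swap_sq ψ a b
  have hsign : (-1 : ℤˣ) ^ (#(ψ (swap a b)).support / 2) = -1 := by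
    rw [← sign_of_sq_eq_one hsq, sign_mulEquiv_apply, sign_swap hab]
  have heven := two_dvd_card_support hsq
  have hpos : #(ψ (swap a b)).support ≠ 0 := by
    rw [Ne, card_support_eq_zero, map_eq_one_iff _ ψ.injective, swap_eq_one_iff]
    exact hab
  have hle : #(ψ (swap a b)).support ≤ 6 := Finset.card_le_univ _
  have hne2 : #(ψ (swap a b)).support ≠ 2 := by
    intro h2
    obtain ⟨g, hg⟩ := exists_eq_conj_of_isSwap_map (by simp) ψ fun σ ⟨c, d, hcd, hσ⟩ => by
      rw [← card_support_eq_two, hσ, card_support_mulEquiv_swap_eq ψ hcd hab, h2]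
    exact hψ g hg
  interval_cases h : #(ψ (swap a b)).support <;> first | omega | exact absurd hsign (by decide)

theorem card_support_mulEquiv_of_isThreeCycle {ψ : Perm (Fin 6) ≃* Perm (Fin 6)}
    (hψ : ∀ g, ψ ≠ MulAut.conj g) {t : Perm (Fin 6)} (ht : t.IsThreeCycle) :
    #(ψ t).support = 6 := by
  obtain ⟨a, ha, b, hb, hab⟩ : ∃ a ∈ t.supportᶜ, ∃ b ∈ t.supportᶜ, a ≠ b := by
    rw [← Finset.one_lt_card, Finset.card_compl, ht.card_support, Fintype.card_fin]
    decide
  have hdisj : Disjoint (swap a b) t := by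
    rw [disjoint_iff_disjoint_support, support_swap hab, Finset.disjoint_insert_left,
      Finset.disjoint_singleton_left]
    exact ⟨Finset.mem_compl.mp ha, Finset.mem_compl.mp hb⟩
  have hcomm : Commute (ψ (swap a b)) (ψ t) := hdisj.commute.map ψ
  have hfree : ∀ x, ψ (swap a b) x ≠ x := fun x => by
    rw [← mem_support, Finset.eq_univ_of_card _ (card_support_mulEquiv_swap_eq_six hψ hab)]
    exact Finset.mem_univ x
  have hcube : ψ t ^ 3 = 1 := by rw [← map_pow, ← ht.orderOf, pow_orderOf_eq_one, map_one]
  have hdvd : 3 ∣ #(ψ t).support := dvd_card_support_of_pow_prime_eq_one hcube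
  have hne3 : #(ψ t).support ≠ 3 := by
    intro h3
    have hu := card_support_eq_three_iff.mp h3
    obtain ⟨x, hx, -⟩ := hu.isCycle
    exact hfree x (hu.isCycle.apply_eq_self_of_commute (by rw [hu.orderOf]; decide)
      (mulEquiv_swap_sq ψ a b) hcomm hx)
  have hpos : #(ψ t).support ≠ 0 := by
    rw [Ne, card_support_eq_zero, map_eq_one_iff _ ψ.injective]
    exact ht.isCycle.ne_one
  have hle : #(ψ t).support ≤ 6 := Finset.card_le_univ _
  omega

theorem card_support_mulEquiv_eq_six {ψ : Perm (Fin 6) ≃* Perm (Fin 6)}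
    (hψ : ∀ g, ψ ≠ MulAut.conj g) {t : Perm (Fin 6)} (ht : t ≠ 1) (ht3 : #t.support ≤ 3) :
    #(ψ t).support = 6 := by
  have h2 := two_le_card_support_of_ne_one ht
  obtain h | h : #t.support = 2 ∨ #t.support = 3 := by omega
  · obtain ⟨a, b, hab, rfl⟩ := card_support_eq_two.mp h
    exact card_support_mulEquiv_swap_eq_six hψ hab
  · exact card_support_mulEquiv_of_isThreeCycle hψ (card_support_eq_three_iff.mp h)

theorem eight_le_card_support_add_card_support_mulEquiv {φ : Perm (Fin 6) ≃* Perm (Fin 6)}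
    (hφ : ∀ g, φ ≠ MulAut.conj g) {t : Perm (Fin 6)} (ht : t ≠ 1) :
    8 ≤ #t.support + #(φ t).support := by
  have hφt : φ t ≠ 1 := (map_ne_one_iff φ φ.injective).mpr ht
  have hm := two_le_card_support_of_ne_one ht
  have hk := two_le_card_support_of_ne_one hφt
  by_cases hm3 : #t.support ≤ 3
  · have := card_support_mulEquiv_eq_six hφ ht hm3
    omega
  by_cases hk3 : #(φ t).support ≤ 3
  · have := card_support_mulEquiv_eq_six (MulEquiv.symm_ne_conj hφ) hφt hk3
    rw [MulEquiv.symm_apply_apply] at this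
    omega
  omega

end Equiv.Perm

/-- For a non-inner automorphism `φ` of `S₆`,
`min_{t ≠ 1} (|supp t| + |supp (φ t)|) = 8` while `min_{t ≠ 1} 2·|supp t| = 4`; hence the
twisted permutation code `C(S₆,(id,φ))` has minimum distance `8`, strictly greater than the
minimum distance `4` of the 2-fold repetition permutation code of `S₆`. -/
theorem twisted_stmt5 (φ : Equiv.Perm (Fin 6) ≃* Equiv.Perm (Fin 6))
    (hφ : ¬ ∃ g : Equiv.Perm (Fin 6), ∀ t : Equiv.Perm (Fin 6), φ t = g⁻¹ * t * g) :
    sInf {d : ℕ | ∃ t : Equiv.Perm (Fin 6), t ≠ 1 ∧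
        d = t.support.card + (φ t).support.card} = 8 ∧
    sInf {d : ℕ | ∃ t : Equiv.Perm (Fin 6), t ≠ 1 ∧ d = 2 * t.support.card} = 4 := by
  have hφ' : ∀ g, φ ≠ MulAut.conj g := fun g h => hφ ⟨g⁻¹, fun t => by simp [h]⟩
  have h01 : (0 : Fin 6) ≠ 1 := by decide
  have hswap : swap (0 : Fin 6) 1 ≠ 1 := by rw [Ne, swap_eq_one_iff]; exact h01
  refine ⟨IsLeast.csInf_eq ⟨⟨φ.symm (swap 0 1), ?_, ?_⟩, ?_⟩,
    IsLeast.csInf_eq ⟨⟨swap 0 1, hswap, by rw [card_support_swap h01]⟩, ?_⟩⟩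
  · exact (map_ne_one_iff φ.symm φ.symm.injective).mpr hswap
  · rw [MulEquiv.apply_symm_apply, card_support_swap h01,
      card_support_mulEquiv_swap_eq_six (MulEquiv.symm_ne_conj hφ') h01]
  · rintro _ ⟨t, ht, rfl⟩
    exact eight_le_card_support_add_card_support_mulEquiv hφ' ht
  · rintro _ ⟨t, ht, rfl⟩
    have := two_le_card_support_of_ne_one ht
    omega
end

section
/- Let A₆ denote the alternating group on six points, regarded as a subgroup of S₆, and let φ be an automorphism of A₆ that is not induced by conjugation by any element of S₆, i.e. there is no g ∈ S₆ with φ(t) = g⁻¹ t g for all t ∈ A₆. Then min over all t ∈ A₆ with t ≠ 1 of ( |supp(t)| + |supp(φ(t))| ) equals 8, whereas min over all t ∈ A₆ with t ≠ 1 of 2·|supp(t)| equals 6. Hence the twisted permutation code C(A₆,(id,φ)) has minimum distance 8, strictly greater than the minimum distance 6 of the 2-fold repetition permutation code of A₆. -/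
/-!
A nontrivial even permutation moves at least three points, and exactly three only if it is a
3-cycle. If both `t` and `φ t` were 3-cycles, `φ` would preserve the conjugacy class of
3-cycles, so it would send the generators `(0 1 k)`, `k = 2, …, 5`, of `A₆` to 3-cycles
satisfying the same relations `((0 1 j) (0 1 k))² = 1`; a finite check shows that every such
quadruple is a simultaneous `S₆`-conjugate of the generators, so `φ` would be induced by `S₆`.
Hence when one of `t`, `φ t` is a 3-cycle, the other has order 3 without being a 3-cycle and
moves all six points; otherwise both move at least four. The bound 8 is attained at
`(0 1)(2 3)`, whose image is an even involution, hence again a double transposition.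
-/

open Equiv Equiv.Perm Finset

namespace Equiv.Perm

variable {α : Type*} [Fintype α] [DecidableEq α] {σ : Perm α}

theorem three_le_card_support_of_mem_alternatingGroup (hσ : σ ∈ alternatingGroup α)
    (h1 : σ ≠ 1) : 3 ≤ #σ.support := by
  refine Nat.succ_le_of_lt ((two_le_card_support_of_ne_one h1).lt_of_ne' fun h2 => ?_)
  obtain ⟨x, y, hxy, rfl⟩ := card_support_eq_two.mp h2
  rw [mem_alternatingGroup, sign_swap hxy] at hσ
  exact absurd hσ (by decide)

theorem exists_card_support_eq_mul_orderOf (hσ : (orderOf σ).Prime) :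
    ∃ n, #σ.support = (n + 1) * orderOf σ := by
  obtain ⟨n, hn⟩ := cycleType_prime_order hσ
  exact ⟨n, by rw [← sum_cycleType, hn, Multiset.sum_replicate, smul_eq_mul]⟩

theorem four_dvd_card_support_of_orderOf_eq_two (hσ : σ ∈ alternatingGroup α)
    (h2 : orderOf σ = 2) : 4 ∣ #σ.support := by
  obtain ⟨n, hn⟩ := cycleType_prime_order (h2 ▸ Nat.prime_two)
  rw [mem_alternatingGroup, sign_of_cycleType, hn, h2, Multiset.sum_replicate,
    Multiset.card_replicate, smul_eq_mul, neg_one_pow_eq_one_iff_even (by decide)] at hσ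
  rw [← sum_cycleType, hn, h2, Multiset.sum_replicate, smul_eq_mul]
  obtain ⟨k, hk⟩ := hσ
  exact ⟨(n + 1) / 2, by omega⟩

theorem IsThreeCycle.exists_eq_swap_mul_swap (h : σ.IsThreeCycle) :
    ∃ a b c, a ≠ b ∧ a ≠ c ∧ b ≠ c ∧ σ = swap a b * swap b c := by
  obtain ⟨a, ha⟩ := card_pos.mp (h.card_support ▸ three_pos)
  have hnodup := h.nodup_iff_mem_support.mpr ha
  simp only [List.nodup_cons, List.mem_cons, List.not_mem_nil, or_false, not_or] at hnodup
  exact ⟨a, σ a, σ (σ a), hnodup.1.1, hnodup.1.2, hnodup.2.1,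
    h.eq_swap_mul_swap_iff_mem_support.mpr ha⟩

theorem IsThreeCycle.conj (h : σ.IsThreeCycle) (τ : Perm α) :
    (τ * σ * τ⁻¹).IsThreeCycle := by
  rwa [IsThreeCycle, cycleType_conj]

end Equiv.Perm

namespace alternatingGroup

variable {α : Type*} [Fintype α] [DecidableEq α]

theorem isThreeCycle_map_of_isThreeCycle (h5 : 5 ≤ Nat.card α)
    (ψ : alternatingGroup α ≃* alternatingGroup α) {t s : alternatingGroup α}
    (ht : (t : Perm α).IsThreeCycle) (hψt : (ψ t : Perm α).IsThreeCycle)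
    (hs : (s : Perm α).IsThreeCycle) : (ψ s : Perm α).IsThreeCycle := by
  have hconj := (alternatingGroup α).subtype.map_isConj
    (ψ.toMonoidHom.map_isConj (isThreeCycle_isConj h5 ht hs))
  exact (isConj_iff_cycleType_eq.mp hconj).symm.trans hψt

end alternatingGroup

section Fin6

open Subgroup

/-- The 3-cycle `(0 1 k)` for `k = i + 2 ∈ {2, 3, 4, 5}`. -/
def cycle01 (i : Fin 4) : Perm (Fin 6) := swap 0 1 * swap 1 (i.natAdd 2)

theorem isThreeCycle_cycle01 (i : Fin 4) : (cycle01 i).IsThreeCycle :=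
  card_support_eq_three_iff.mp (by revert i; decide)

theorem cycle01_mem_alternatingGroup (i : Fin 4) : cycle01 i ∈ alternatingGroup (Fin 6) :=
  (isThreeCycle_cycle01 i).mem_alternatingGroup

theorem sq_cycle01_mul_cycle01 : ∀ i j, i ≠ j → (cycle01 i * cycle01 j) ^ 2 = 1 := by decide

def cycle01Conjugators : List (Perm (Fin 6)) :=
  1 :: ((List.finRange 4).map cycle01 ++ (List.finRange 4).map fun i => (cycle01 i)⁻¹)

theorem exists_swap_mul_swap_eq_conj_cycle01 :
    ∀ a b c : Fin 6, a ≠ b → a ≠ c → b ≠ c →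
      ∃ x ∈ cycle01Conjugators, ∃ y ∈ cycle01Conjugators, ∃ i,
        swap a b * swap b c = x * y * cycle01 i * (x * y)⁻¹ := by
  decide +kernel

theorem closure_range_cycle01 : closure (Set.range cycle01) = alternatingGroup (Fin 6) := by
  refine le_antisymm ((closure_le _).mpr ?_) ?_
  · rintro _ ⟨i, rfl⟩
    exact cycle01_mem_alternatingGroup i
  rw [← closure_three_cycles_eq_alternating, closure_le]
  intro σ hσ
  have hconj : ∀ x ∈ cycle01Conjugators, x ∈ closure (Set.range cycle01) := by
    simp only [cycle01Conjugators, List.mem_cons, List.mem_append, List.mem_map,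
      List.mem_finRange, true_and]
    rintro x (rfl | ⟨i, rfl⟩ | ⟨i, rfl⟩)
    · exact one_mem _
    · exact subset_closure ⟨i, rfl⟩
    · exact inv_mem (subset_closure ⟨i, rfl⟩)
  obtain ⟨a, b, c, hab, hac, hbc, rfl⟩ := hσ.exists_eq_swap_mul_swap
  obtain ⟨x, hx, y, hy, i, hconj_eq⟩ := exists_swap_mul_swap_eq_conj_cycle01 a b c hab hac hbc
  have hxy := mul_mem (hconj x hx) (hconj y hy)
  rw [SetLike.mem_coe, hconj_eq]
  exact mul_mem (mul_mem hxy (subset_closure ⟨i, rfl⟩)) (inv_mem hxy)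

theorem closure_cycle01_eq_top :
    closure {t : alternatingGroup (Fin 6) | (t : Perm (Fin 6)) ∈ Set.range cycle01} = ⊤ := by
  have himage : (alternatingGroup (Fin 6)).subtype ''
      {t | (t : Perm (Fin 6)) ∈ Set.range cycle01} = Set.range cycle01 :=
    Subtype.coe_image_of_subset fun _ ⟨i, hi⟩ => hi ▸ cycle01_mem_alternatingGroup i
  rw [← map_subtype_inj, MonoidHom.map_closure, himage, closure_range_cycle01,
    ← MonoidHom.range_eq_map, range_subtype]

/-- Every 3-cycle of `Fin 6` exactly once, written from its smallest point. -/
def threeCycles : List (Perm (Fin 6)) :=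
  (List.finRange 6).flatMap fun a => (List.finRange 6).flatMap fun b =>
    (List.finRange 6).filterMap fun c =>
      if a < b ∧ a < c ∧ b ≠ c then some (swap a b * swap b c) else none

theorem mem_threeCycles {σ : Perm (Fin 6)} (h : σ.IsThreeCycle) : σ ∈ threeCycles := by
  obtain ⟨a, b, c, hab, hac, hbc, rfl⟩ := h.exists_eq_swap_mul_swap
  clear h
  revert a b c
  decide

def linkedThreeCycles : List (Perm (Fin 6)) :=
  threeCycles.filter fun σ => (cycle01 0 * σ) ^ 2 = 1

/-- The centralizer `⟨(0 1 2)⟩ × Perm {3, 4, 5}` of `cycle01 0 = (0 1 2)` in `Perm (Fin 6)`. -/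
def centralizerCycle01Zero : List (Perm (Fin 6)) :=
  [1, cycle01 0, cycle01 0 ^ 2].flatMap fun x =>
    [1, swap 3 4, swap 3 5, swap 4 5, swap 3 4 * swap 4 5, swap 4 5 * swap 3 4].map (x * ·)

theorem exists_conj_eq_of_mem_linkedThreeCycles :
    ∀ v₁ ∈ linkedThreeCycles, ∀ v₂ ∈ linkedThreeCycles, ∀ v₃ ∈ linkedThreeCycles,
      (v₁ * v₂) ^ 2 = 1 → (v₁ * v₃) ^ 2 = 1 → (v₂ * v₃) ^ 2 = 1 →
      ∃ g ∈ centralizerCycle01Zero,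
        ∀ i, g⁻¹ * cycle01 i * g = ![cycle01 0, v₁, v₂, v₃] i := by
  -- Through `List.all`: `decide` on `∀ v ∈ l` would enumerate all of `Perm (Fin 6)`.
  have h : (linkedThreeCycles.all fun v₁ => linkedThreeCycles.all fun v₂ =>
      linkedThreeCycles.all fun v₃ => decide ((v₁ * v₂) ^ 2 = 1 → (v₁ * v₃) ^ 2 = 1 →
        (v₂ * v₃) ^ 2 = 1 → ∃ g ∈ centralizerCycle01Zero,
          ∀ i, g⁻¹ * cycle01 i * g = ![cycle01 0, v₁, v₂, v₃] i)) = true := by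
    decide +kernel
  simpa only [List.all_eq_true, decide_eq_true_eq] using h

theorem exists_conj_cycle01_of_relations (u : Fin 4 → Perm (Fin 6))
    (hu : ∀ i, (u i).IsThreeCycle) (hrel : ∀ i j, i ≠ j → (u i * u j) ^ 2 = 1) :
    ∃ g : Perm (Fin 6), ∀ i, u i = g⁻¹ * cycle01 i * g := by
  obtain ⟨w, hw⟩ := isConj_iff.mp
    (isConj_iff_cycleType_eq.mpr ((hu 0).trans (isThreeCycle_cycle01 0).symm))
  set v : Fin 4 → Perm (Fin 6) := fun i => MulAut.conj w (u i) with hv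
  have hv0 : v 0 = cycle01 0 := hw
  have hvrel : ∀ i j, i ≠ j → (v i * v j) ^ 2 = 1 := fun i j hij => by
    simp only [hv, ← map_mul, ← map_pow, hrel i j hij, map_one]
  have hvlinked : ∀ i, i ≠ 0 → v i ∈ linkedThreeCycles := fun i hi => by
    simp only [linkedThreeCycles, List.mem_filter, decide_eq_true_eq]
    exact ⟨mem_threeCycles ((hu i).conj w), hv0 ▸ hvrel 0 i hi.symm⟩
  obtain ⟨g, -, hg⟩ := exists_conj_eq_of_mem_linkedThreeCycles
    (v 1) (hvlinked 1 (by decide)) (v 2) (hvlinked 2 (by decide)) (v 3) (hvlinked 3 (by decide))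
    (hvrel 1 2 (by decide)) (hvrel 1 3 (by decide)) (hvrel 2 3 (by decide))
  have hgv : ∀ i, g⁻¹ * cycle01 i * g = v i := fun i => by
    rw [hg i]
    fin_cases i <;> simp [hv0]
  refine ⟨g * w, fun i => ?_⟩
  calc u i = w⁻¹ * v i * w := by simp [hv, MulAut.conj_apply, mul_assoc]
    _ = (g * w)⁻¹ * cycle01 i * (g * w) := by rw [← hgv]; group

theorem exists_conj_of_forall_isThreeCycle
    (ψ : alternatingGroup (Fin 6) ≃* alternatingGroup (Fin 6))
    (hψ : ∀ t : alternatingGroup (Fin 6),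
      (t : Perm (Fin 6)).IsThreeCycle → (ψ t : Perm (Fin 6)).IsThreeCycle) :
    ∃ g : Perm (Fin 6), ∀ t : alternatingGroup (Fin 6),
      (ψ t : Perm (Fin 6)) = g⁻¹ * (t : Perm (Fin 6)) * g := by
  let c : Fin 4 → alternatingGroup (Fin 6) :=
    fun i => ⟨cycle01 i, cycle01_mem_alternatingGroup i⟩
  let F : alternatingGroup (Fin 6) →* Perm (Fin 6) :=
    (alternatingGroup (Fin 6)).subtype.comp ψ.toMonoidHom
  have hcrel : ∀ i j, i ≠ j → (c i * c j) ^ 2 = 1 := fun i j hij =>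
    Subtype.ext (sq_cycle01_mul_cycle01 i j hij)
  obtain ⟨g, hg⟩ := exists_conj_cycle01_of_relations (fun i => F (c i))
    (fun i => hψ (c i) (isThreeCycle_cycle01 i))
    (fun i j hij => by simp only [← map_mul, ← map_pow, hcrel i j hij, map_one])
  have hF : F = (MulAut.conj g⁻¹).toMonoidHom.comp (alternatingGroup (Fin 6)).subtype := by
    refine MonoidHom.eq_of_eqOn_dense closure_cycle01_eq_top ?_
    rintro t ⟨i, hi⟩
    obtain rfl : t = c i := Subtype.ext hi.symm
    simpa [MulAut.conj_apply] using hg i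
  exact ⟨g, fun t => (DFunLike.congr_fun hF t).trans (by simp)⟩

theorem card_support_eq_three_or_six {σ : Perm (Fin 6)} (h : orderOf σ = 3) :
    #σ.support = 3 ∨ #σ.support = 6 := by
  obtain ⟨n, hn⟩ := exists_card_support_eq_mul_orderOf (h ▸ Nat.prime_three)
  rw [h] at hn
  have hle : #σ.support ≤ 6 := σ.support.card_le_univ
  omega

theorem card_support_eq_four {σ : Perm (Fin 6)} (hσ : σ ∈ alternatingGroup (Fin 6))
    (h : orderOf σ = 2) : #σ.support = 4 := by
  have hdvd := four_dvd_card_support_of_orderOf_eq_two hσ h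
  have hge := three_le_card_support_of_mem_alternatingGroup hσ
    (fun h1 => by simp [h1] at h)
  have hle : #σ.support ≤ 6 := σ.support.card_le_univ
  omega

theorem eight_le_card_support_add_card_support_map
    (φ : alternatingGroup (Fin 6) ≃* alternatingGroup (Fin 6))
    (hφ : ¬ ∃ g : Perm (Fin 6), ∀ t : alternatingGroup (Fin 6),
      (φ t : Perm (Fin 6)) = g⁻¹ * (t : Perm (Fin 6)) * g)
    {t : alternatingGroup (Fin 6)} (ht : t ≠ 1) :
    8 ≤ #(t : Perm (Fin 6)).support + #(φ t : Perm (Fin 6)).support := by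
  have h₁ := three_le_card_support_of_mem_alternatingGroup t.2 (by exact_mod_cast ht)
  have h₂ := three_le_card_support_of_mem_alternatingGroup (φ t).2
    (by exact_mod_cast (map_ne_one_iff φ φ.injective).mpr ht)
  by_cases h3 : #(t : Perm (Fin 6)).support = 3 ∨ #(φ t : Perm (Fin 6)).support = 3
  swap
  · omega
  have horder : orderOf (φ t : Perm (Fin 6)) = orderOf (t : Perm (Fin 6)) := by
    rw [Subgroup.orderOf_coe, Subgroup.orderOf_coe, MulEquiv.orderOf_eq]
  have hord3 : orderOf (t : Perm (Fin 6)) = 3 := by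
    rcases h3 with h3 | h3
    · exact (card_support_eq_three_iff.mp h3).orderOf
    · exact horder ▸ (card_support_eq_three_iff.mp h3).orderOf
  have hnot_both : ¬ (#(t : Perm (Fin 6)).support = 3 ∧ #(φ t : Perm (Fin 6)).support = 3) :=
    fun ⟨h, h'⟩ => hφ <| exists_conj_of_forall_isThreeCycle φ fun _ hs =>
      alternatingGroup.isThreeCycle_map_of_isThreeCycle (by simp) φ
        (card_support_eq_three_iff.mp h) (card_support_eq_three_iff.mp h') hs
  have := card_support_eq_three_or_six hord3
  have := card_support_eq_three_or_six (horder.trans hord3)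
  omega

end Fin6

/-- For an automorphism `φ` of `A₆` not induced by conjugation by any element
of `S₆`, `min_{1 ≠ t ∈ A₆} (|supp t| + |supp (φ t)|) = 8` while
`min_{1 ≠ t ∈ A₆} 2·|supp t| = 6`; hence the twisted permutation code `C(A₆,(id,φ))` has
minimum distance `8 > 6`. -/
theorem twisted_stmt6 (φ : alternatingGroup (Fin 6) ≃* alternatingGroup (Fin 6))
    (hφ : ¬ ∃ g : Equiv.Perm (Fin 6), ∀ t : alternatingGroup (Fin 6),
        (↑(φ t) : Equiv.Perm (Fin 6)) = g⁻¹ * (↑t : Equiv.Perm (Fin 6)) * g) :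
    sInf {d : ℕ | ∃ t : alternatingGroup (Fin 6), t ≠ 1 ∧
        d = (↑t : Equiv.Perm (Fin 6)).support.card
            + (↑(φ t) : Equiv.Perm (Fin 6)).support.card} = 8 ∧
    sInf {d : ℕ | ∃ t : alternatingGroup (Fin 6), t ≠ 1 ∧
        d = 2 * (↑t : Equiv.Perm (Fin 6)).support.card} = 6 := by
  let d : alternatingGroup (Fin 6) :=
    ⟨swap 0 1 * swap 2 3, mem_alternatingGroup.mpr (by decide)⟩
  have hd : orderOf (d : Perm (Fin 6)) = 2 := orderOf_eq_prime (by decide) (by decide)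
  have hφd : #(φ d : Perm (Fin 6)).support = 4 := card_support_eq_four (φ d).2 <| by
    rwa [Subgroup.orderOf_coe, MulEquiv.orderOf_eq, ← Subgroup.orderOf_coe]
  let c : alternatingGroup (Fin 6) := ⟨cycle01 0, cycle01_mem_alternatingGroup 0⟩
  refine ⟨IsLeast.csInf_eq ⟨⟨d, ?_, ?_⟩, ?_⟩,
    IsLeast.csInf_eq ⟨⟨c, ?_, ?_⟩, ?_⟩⟩
  · exact fun h => by simp [h] at hd
  · rw [hφd]; decide
  · rintro _ ⟨t, ht, rfl⟩
    exact eight_le_card_support_add_card_support_map φ hφ ht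
  · exact fun h => (isThreeCycle_cycle01 0).ne_one (congrArg Subtype.val h)
  · rw [(isThreeCycle_cycle01 0).card_support]
  · rintro _ ⟨t, ht, rfl⟩
    have := three_le_card_support_of_mem_alternatingGroup t.2 (by exact_mod_cast ht)
    omega
end

section
/- Let φ be an automorphism of the symmetric group S₆ on the set Q = {1,…,6} with φ∘φ = id and φ not inner. Let C be the twisted permutation code in the Hamming graph H(12,6), i.e. C = { f_t : t ∈ S₆ } where f_t : {1,2} × Q → Q is given by f_t(1,x) = t(x) and f_t(2,x) = φ(t)(x). Let C₁ = { ν : {1,2} × Q → Q | min_{c ∈ C} d(ν,c) = 1 } be the set of neighbours of C. Then C is neighbour transitive: there exists a group G of permutations of the set of functions {1,2} × Q → Q such that every element of G preserves the Hamming distance, C is a single orbit of G, and C₁ is a single orbit of G. -/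
/-- The twisted permutation code `C(S₆,(id,φ))` in the Hamming graph `H(12,6)`:
its codewords are the functions `f_t : {1,2} × Q → Q` with `f_t(1,x) = t(x)` and
`f_t(2,x) = φ(t)(x)`. -/
def twistedCodeS6 (φ : Equiv.Perm (Fin 6) ≃* Equiv.Perm (Fin 6)) :
    Set (Fin 2 × Fin 6 → Fin 6) :=
  {h | ∃ t : Equiv.Perm (Fin 6),
    h = fun p : Fin 2 × Fin 6 => if p.1 = 0 then t p.2 else (φ t) p.2}

/-- The set of neighbours of the code: vertices at minimum distance `1` from the code. -/
def twistedCodeS6Nbrs (φ : Equiv.Perm (Fin 6) ≃* Equiv.Perm (Fin 6)) :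
    Set (Fin 2 × Fin 6 → Fin 6) :=
  {ν | sInf {d : ℕ | ∃ c ∈ twistedCodeS6 φ, d = hammingDist ν c} = 1}

/-!
Left multiplications `f_u ↦ f_{t u}` are Hamming isometries acting regularly on the code, so the
group of isometries preserving the code is transitive on it. Every neighbour of the code is thus
moved to a neighbour of `f_1 = Prod.snd`, i.e. to some `update Prod.snd (i, y) b` with `b ≠ y`.
The conjugations `f_u ↦ f_{s u s⁻¹}` fix `f_1` and act on the row-`0` neighbours as `Perm Q` acts
on ordered pairs of distinct points, hence transitively; since `φ` is an involution, swapping the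
two rows also preserves the code and carries row-`0` neighbours to row-`1` neighbours.
-/

open Equiv MulAction Pointwise

section Hamming

variable {ι β : Type*}

def hammingEquiv (π : Perm ι) (α : ι → Perm β) : Perm (ι → β) :=
  (π.arrowCongr (Equiv.refl β)).trans (Equiv.piCongrRight α)

lemma hammingEquiv_apply (π : Perm ι) (α : ι → Perm β) (ν : ι → β) (p : ι) :
    hammingEquiv π α ν p = α p (ν (π.symm p)) := rfl

lemma hammingEquiv_update [DecidableEq ι] (π : Perm ι) (α : ι → Perm β) (f : ι → β)
    (p : ι) (a : β) :
    hammingEquiv π α (Function.update f p a) =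
      Function.update (hammingEquiv π α f) (π p) (α (π p) a) := by
  funext q
  rcases eq_or_ne q (π p) with rfl | hq
  · simp [hammingEquiv_apply]
  · simp [hammingEquiv_apply, hq, π.symm_apply_eq]

variable [Fintype ι] [DecidableEq β]

variable (ι β) in
def hammingIsometries : Subgroup (Perm (ι → β)) where
  carrier := {g | ∀ u v, hammingDist (g u) (g v) = hammingDist u v}
  mul_mem' hg hh u v := (hg _ _).trans (hh u v)
  one_mem' _ _ := rfl
  inv_mem' {g} hg u v := by
    have := hg (g.symm u) (g.symm v)
    rw [apply_symm_apply, apply_symm_apply] at this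
    exact this.symm

lemma hammingDist_comp_equiv (π : ι ≃ ι) (u v : ι → β) :
    hammingDist (u ∘ π) (v ∘ π) = hammingDist u v :=
  Finset.card_equiv π fun p => by simp

lemma hammingEquiv_mem_hammingIsometries (π : Perm ι) (α : ι → Perm β) :
    hammingEquiv π α ∈ hammingIsometries ι β := fun u v =>
  (hammingDist_comp (fun p => α p) fun p => (α p).injective).trans
    (hammingDist_comp_equiv π.symm u v)

lemma hammingDist_update_self [DecidableEq ι] (f : ι → β) {p : ι} {a : β} (h : a ≠ f p) :
    hammingDist (Function.update f p a) f = 1 := by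
  rw [hammingDist, Finset.card_eq_one]
  refine ⟨p, Finset.ext fun q => ?_⟩
  rcases eq_or_ne q p with rfl | hq <;> simp [*]

lemma exists_eq_update_of_hammingDist_eq_one [DecidableEq ι] {u f : ι → β}
    (h : hammingDist u f = 1) : ∃ p, u p ≠ f p ∧ u = Function.update f p (u p) := by
  obtain ⟨p, hp⟩ := Finset.card_eq_one.mp h
  have hdiff : ∀ q, u q ≠ f q ↔ q = p := fun q => by
    simpa using Finset.ext_iff.mp hp q
  refine ⟨p, (hdiff p).mpr rfl, funext fun q => ?_⟩
  rcases eq_or_ne q p with rfl | hq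
  · simp
  · simpa [hq] using mt (hdiff q).mp hq

def codeNeighbours (C : Set (ι → β)) : Set (ι → β) :=
  {ν | sInf {d : ℕ | ∃ c ∈ C, d = hammingDist ν c} = 1}

lemma mem_codeNeighbours_iff {C : Set (ι → β)} {ν : ι → β} :
    ν ∈ codeNeighbours C ↔ ν ∉ C ∧ ∃ c ∈ C, hammingDist ν c = 1 := by
  set D := {d : ℕ | ∃ c ∈ C, d = hammingDist ν c}
  have hzero : 0 ∈ D ↔ ν ∈ C := by simp [D, eq_comm (a := 0), hammingDist_eq_zero]
  have hone : 1 ∈ D ↔ ∃ c ∈ C, hammingDist ν c = 1 := by simp [D, eq_comm (a := 1)]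
  change sInf D = 1 ↔ _
  rw [← hzero, ← hone]
  constructor
  · intro h
    refine ⟨fun h0 => by simp [Nat.sInf_eq_zero.mpr (.inl h0)] at h, h ▸ Nat.sInf_mem ?_⟩
    exact Nat.nonempty_of_sInf_eq_succ h
  · rintro ⟨h0, h1⟩
    refine le_antisymm (Nat.sInf_le h1) (Nat.one_le_iff_ne_zero.mpr fun h => ?_)
    rcases Nat.sInf_eq_zero.mp h with h | h
    exacts [h0 h, by simp [h] at h1]

lemma smul_mem_codeNeighbours {C : Set (ι → β)} {g : Perm (ι → β)}
    (hg : g ∈ hammingIsometries ι β) (hgC : g ∈ stabilizer (Perm (ι → β)) C) {ν : ι → β}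
    (hν : ν ∈ codeNeighbours C) : g • ν ∈ codeNeighbours C := by
  obtain ⟨hνC, c, hc, hd⟩ := mem_codeNeighbours_iff.mp hν
  refine mem_codeNeighbours_iff.mpr ⟨?_, g • c, (mem_stabilizer_set.mp hgC c).mpr hc, ?_⟩
  · rwa [mem_stabilizer_set.mp hgC]
  · rw [Perm.smul_def, Perm.smul_def, hg, hd]

end Hamming

lemma mem_stabilizer_range_of_smul_eq {G α ι : Type*} [Group G] [MulAction G α] {c : ι → α}
    {g : G} (f : ι ≃ ι) (h : ∀ i, g • c i = c (f i)) : g ∈ stabilizer G (Set.range c) := by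
  rw [mem_stabilizer_iff, Set.smul_set_range]
  simp_rw [h]
  exact f.surjective.range_comp c

lemma eq_orbit_of_forall_exists_smul_eq {G α : Type*} [Group G] [MulAction G α] {H : Subgroup G}
    {s : Set α} {a : α} (ha : a ∈ s) (hs : ∀ g ∈ H, ∀ b ∈ s, g • b ∈ s)
    (h : ∀ b ∈ s, ∃ g ∈ H, g • a = b) : s = orbit H a := by
  ext b
  constructor
  · intro hb
    obtain ⟨g, hg, rfl⟩ := h b hb
    exact ⟨⟨g, hg⟩, rfl⟩
  · rintro ⟨⟨g, hg⟩, rfl⟩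
    exact hs g hg a ha

namespace TwistedCode

variable {Q : Type*} (φ : Perm Q ≃* Perm Q)

def rowPerm : Perm Q →* (Fin 2 → Perm Q) :=
  MonoidHom.pi fun i => if i = 0 then MonoidHom.id _ else φ.toMonoidHom

@[simp] lemma rowPerm_zero (t : Perm Q) : rowPerm φ t 0 = t := rfl

@[simp] lemma rowPerm_one (t : Perm Q) : rowPerm φ t 1 = φ t := rfl

def codeword (t : Perm Q) : Fin 2 × Q → Q := fun p => rowPerm φ t p.1 p.2

lemma codeword_one : codeword φ 1 = Prod.snd := by
  funext p
  simp [codeword]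

lemma twistedCodeS6_eq_range_codeword (φ : Perm (Fin 6) ≃* Perm (Fin 6)) :
    twistedCodeS6 φ = Set.range (codeword φ) := by
  have h (t : Perm (Fin 6)) :
      codeword φ t = fun p => if p.1 = 0 then t p.2 else (φ t) p.2 := by
    funext ⟨i, x⟩
    fin_cases i <;> rfl
  ext f
  simp [twistedCodeS6, h, eq_comm]

def leftMul (t : Perm Q) : Perm (Fin 2 × Q → Q) :=
  hammingEquiv 1 fun p => rowPerm φ t p.1

def conj (s : Perm Q) : Perm (Fin 2 × Q → Q) :=
  hammingEquiv (prodShear (Equiv.refl _) (rowPerm φ s)) fun p => rowPerm φ s p.1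

def swapRows : Perm (Fin 2 × Q → Q) :=
  hammingEquiv (prodCongr (swap 0 1) (Equiv.refl Q)) 1

variable {φ}

lemma leftMul_apply (t : Perm Q) (ν : Fin 2 × Q → Q) (p : Fin 2 × Q) :
    leftMul φ t ν p = rowPerm φ t p.1 (ν p) := rfl

lemma leftMul_codeword (t u : Perm Q) : leftMul φ t (codeword φ u) = codeword φ (t * u) := by
  funext p
  simp [leftMul_apply, codeword]

lemma conj_codeword (s u : Perm Q) :
    conj φ s (codeword φ u) = codeword φ (s * u * s⁻¹) := by
  funext p
  simp [conj, codeword, hammingEquiv_apply]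

lemma swapRows_apply (ν : Fin 2 × Q → Q) (i : Fin 2) (x : Q) :
    swapRows ν (i, x) = ν (swap 0 1 i, x) := by
  simp [swapRows, hammingEquiv_apply]

lemma swapRows_codeword (hφ2 : ∀ t, φ (φ t) = t) (u : Perm Q) :
    swapRows (codeword φ u) = codeword φ (φ u) := by
  funext ⟨i, x⟩
  fin_cases i <;> simp [swapRows_apply, codeword, hφ2]

variable [DecidableEq Q]

lemma conj_update_snd (s : Perm Q) (x a : Q) :
    conj φ s (Function.update Prod.snd (0, x) a) = Function.update Prod.snd (0, s x) (s a) := by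
  rw [conj, hammingEquiv_update, ← conj, ← codeword_one φ, conj_codeword]
  simp

lemma swapRows_update_snd (x a : Q) :
    swapRows (Function.update Prod.snd (0, x) a) = Function.update Prod.snd (1, x) a := by
  funext ⟨i, y⟩
  fin_cases i <;> simp [swapRows_apply, Function.update_apply]

lemma update_snd_notMem_range_codeword {x a : Q} (h : x ≠ a) (i : Fin 2) :
    Function.update Prod.snd (i, x) a ∉ Set.range (codeword φ) := by
  rintro ⟨t, ht⟩
  have hx := congrFun ht (i, x)
  have ha := congrFun ht (i, a)
  simp only [codeword, Function.update_apply, Prod.ext_iff, h.symm, and_false] at hx ha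
  exact h ((rowPerm φ t i).injective (by simpa using hx.trans ha.symm))


variable [Fintype Q]

variable (φ) in
def autGroup : Subgroup (Perm (Fin 2 × Q → Q)) :=
  hammingIsometries (Fin 2 × Q) Q ⊓ stabilizer _ (Set.range (codeword φ))

lemma leftMul_mem_autGroup (t : Perm Q) : leftMul φ t ∈ autGroup φ :=
  ⟨hammingEquiv_mem_hammingIsometries _ _,
    mem_stabilizer_range_of_smul_eq (Equiv.mulLeft t) (leftMul_codeword t)⟩

lemma conj_mem_autGroup (s : Perm Q) : conj φ s ∈ autGroup φ :=
  ⟨hammingEquiv_mem_hammingIsometries _ _,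
    mem_stabilizer_range_of_smul_eq (MulAut.conj s).toEquiv (conj_codeword s)⟩

lemma swapRows_mem_autGroup (hφ2 : ∀ t, φ (φ t) = t) : swapRows ∈ autGroup φ :=
  ⟨hammingEquiv_mem_hammingIsometries _ _,
    mem_stabilizer_range_of_smul_eq φ.toEquiv (swapRows_codeword hφ2)⟩

lemma range_codeword_eq_orbit :
    Set.range (codeword φ) = orbit (autGroup φ) (codeword φ 1) := by
  refine eq_orbit_of_forall_exists_smul_eq ⟨1, rfl⟩
    (fun g hg c hc => (mem_stabilizer_set.mp hg.2 c).mpr hc) ?_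
  rintro _ ⟨t, rfl⟩
  exact ⟨leftMul φ t, leftMul_mem_autGroup t, by rw [Perm.smul_def, leftMul_codeword, mul_one]⟩

lemma exists_smul_update_snd_row (hφ2 : ∀ t, φ (φ t) = t) (i : Fin 2) (y b : Q) :
    ∃ r ∈ autGroup φ,
      r • Function.update Prod.snd (0, y) b = Function.update Prod.snd (i, y) b := by
  fin_cases i
  · exact ⟨1, one_mem _, one_smul _ _⟩
  · exact ⟨swapRows, swapRows_mem_autGroup hφ2, swapRows_update_snd y b⟩

lemma exists_smul_update_snd_eq (hφ2 : ∀ t, φ (φ t) = t) {x a : Q} (hxa : x ≠ a)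
    {ν : Fin 2 × Q → Q} (hν : ν ∈ codeNeighbours (Set.range (codeword φ))) :
    ∃ g ∈ autGroup φ, g • Function.update Prod.snd (0, x) a = ν := by
  obtain ⟨-, _, ⟨t, rfl⟩, hd⟩ := mem_codeNeighbours_iff.mp hν
  set μ := (leftMul φ t)⁻¹ ν
  have hμ : hammingDist μ Prod.snd = 1 := by
    rw [← hd, ← (leftMul_mem_autGroup t).1, ← codeword_one φ, leftMul_codeword, mul_one]
    simp [μ]
  obtain ⟨⟨i, y⟩, hne, hμ_eq⟩ := exists_eq_update_of_hammingDist_eq_one hμ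
  obtain ⟨s, hsx, hsa⟩ :=
    is_two_pretransitive_iff.mp (Perm.isMultiplyPretransitive Q 2) hxa (Ne.symm hne)
  obtain ⟨r, hr, hri⟩ := exists_smul_update_snd_row hφ2 i y (μ (i, y))
  refine ⟨leftMul φ t * r * conj φ s,
    mul_mem (mul_mem (leftMul_mem_autGroup t) hr) (conj_mem_autGroup s), ?_⟩
  rw [mul_smul, mul_smul, Perm.smul_def (conj φ s), conj_update_snd, ← Perm.smul_def s,
    ← Perm.smul_def s, hsx, hsa, hri, ← hμ_eq, Perm.smul_def]
  exact apply_symm_apply _ ν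

lemma codeNeighbours_range_codeword_eq_orbit (hφ2 : ∀ t, φ (φ t) = t) {x a : Q} (hxa : x ≠ a) :
    codeNeighbours (Set.range (codeword φ)) =
      orbit (autGroup φ) (Function.update Prod.snd (0, x) a) := by
  refine eq_orbit_of_forall_exists_smul_eq ?_
    (fun g hg ν hν => smul_mem_codeNeighbours hg.1 hg.2 hν)
    (fun ν hν => exists_smul_update_snd_eq hφ2 hxa hν)
  refine mem_codeNeighbours_iff.mpr
    ⟨update_snd_notMem_range_codeword hxa 0, codeword φ 1, ⟨1, rfl⟩, ?_⟩
  rw [codeword_one]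
  exact hammingDist_update_self _ hxa.symm

end TwistedCode

open TwistedCode

theorem twisted_stmt8_general (φ : Equiv.Perm (Fin 6) ≃* Equiv.Perm (Fin 6))
    (hφ2 : ∀ t : Equiv.Perm (Fin 6), φ (φ t) = t) :
    ∃ G : Subgroup (Equiv.Perm (Fin 2 × Fin 6 → Fin 6)),
      (∀ g ∈ G, ∀ u v : Fin 2 × Fin 6 → Fin 6,
        hammingDist (g u) (g v) = hammingDist u v) ∧
      (∃ c : Fin 2 × Fin 6 → Fin 6, twistedCodeS6 φ = MulAction.orbit G c) ∧
      (∃ ν : Fin 2 × Fin 6 → Fin 6, twistedCodeS6Nbrs φ = MulAction.orbit G ν) := by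
  have hnbrs : twistedCodeS6Nbrs φ = codeNeighbours (Set.range (codeword φ)) := by
    rw [← twistedCodeS6_eq_range_codeword]
    rfl
  refine ⟨autGroup φ, fun g hg => hg.1, ⟨codeword φ 1, ?_⟩,
    ⟨Function.update Prod.snd (0, 0) 1, ?_⟩⟩
  · rw [twistedCodeS6_eq_range_codeword, range_codeword_eq_orbit]
  · rw [hnbrs, codeNeighbours_range_codeword_eq_orbit hφ2 (by decide : (0 : Fin 6) ≠ 1)]

/-- For a non-inner involutory automorphism `φ` of `S₆`, the twisted
permutation code `C(S₆,(id,φ))` is neighbour transitive: some group `G` of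
Hamming-distance-preserving permutations of the vertex set of `H(12,6)` has both the code
and its set of neighbours as single orbits. -/
theorem twisted_stmt8 (φ : Equiv.Perm (Fin 6) ≃* Equiv.Perm (Fin 6))
    (hφ2 : ∀ t : Equiv.Perm (Fin 6), φ (φ t) = t)
    (hφ : ¬ ∃ g : Equiv.Perm (Fin 6), ∀ t : Equiv.Perm (Fin 6), φ t = g⁻¹ * t * g) :
    ∃ G : Subgroup (Equiv.Perm (Fin 2 × Fin 6 → Fin 6)),
      (∀ g ∈ G, ∀ u v : Fin 2 × Fin 6 → Fin 6,
        hammingDist (g u) (g v) = hammingDist u v) ∧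
      (∃ c : Fin 2 × Fin 6 → Fin 6, twistedCodeS6 φ = MulAction.orbit G c) ∧
      (∃ ν : Fin 2 × Fin 6 → Fin 6, twistedCodeS6Nbrs φ = MulAction.orbit G ν) :=
  twisted_stmt8_general φ hφ2
end

section
/- Let f ≥ 2, F the finite field of order 2^f, a a generator of the multiplicative group F*, and b = (1+a²)⁻¹. Define the 2×2 matrices over F: x = [[a,0],[0,a⁻¹]], y = [[1,1],[0,1]], z = [[b, b²+b+1],[1, b+1]], each of determinant 1. Then the special linear group SL(2,F) is generated by x, y and z; that is, the subgroup of SL(2,F) generated by {x, y, z} is all of SL(2,F). -/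
/-!
Conjugating the unipotent `y = [[1,1],[0,1]]` by `x = diag(a, a⁻¹)` multiplies its corner entry
by `a²`; in characteristic 2 every element is a square, so the powers of `a²` exhaust `F*` and
`⟨x, y⟩` contains every upper unitriangular matrix. Multiplying `z` by two of these on either side
gives the Weyl element `[[0,1],[1,0]]`, which conjugates upper into lower unitriangular
matrices, and the unitriangular matrices generate `SL(2,F)`.
-/

open MatrixGroups Matrix.SpecialLinearGroup
open scoped commutatorElement

theorem FiniteField.exists_pow_eq_of_orderOf_eq_card_sub_one {K : Type*} [Field K] [Fintype K]
    {a : K} (ha : orderOf a = Fintype.card K - 1) {t : K} (ht : t ≠ 0) :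
    ∃ n : ℕ, a ^ n = t := by
  classical
  have ha0 : a ≠ 0 := by
    rintro rfl
    have := Fintype.one_lt_card (α := K)
    simp at ha
    omega
  lift t to Kˣ using ht.isUnit
  lift a to Kˣ using ha0.isUnit
  rw [orderOf_units, ← Fintype.card_units] at ha
  have htop : Subgroup.zpowers a = ⊤ :=
    Subgroup.eq_top_of_card_eq _ (by rw [Nat.card_zpowers, ha, Nat.card_eq_fintype_card])
  obtain ⟨n, rfl⟩ := mem_powers_iff_mem_zpowers.mpr (htop ▸ Subgroup.mem_top t)
  exact ⟨n, by simp⟩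

namespace Matrix.SpecialLinearGroup

section CommRing

variable {R : Type*} [CommRing R]

theorem mul_transvection_mul_inv_of_coe_eq {w : SL(2, R)}
    (hw : (w : Matrix (Fin 2) (Fin 2) R) = !![0, -1; 1, 0]) (t : R) :
    w * transvection zero_ne_one t * w⁻¹ = transvection one_ne_zero (-t) := by
  rw [mul_inv_eq_iff_eq_mul]
  ext i j
  fin_cases i <;> fin_cases j <;> simp [hw, transvection_coe, Matrix.mul_apply, Fin.sum_univ_two]

theorem coe_transvection_mul_mul_transvection [CharP R 2] {z : SL(2, R)} {b : R}
    (hz : (z : Matrix (Fin 2) (Fin 2) R) = !![b, b ^ 2 + b + 1; 1, b + 1]) :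
    ((transvection zero_ne_one b * z * transvection zero_ne_one (b + 1) : SL(2, R)) :
      Matrix (Fin 2) (Fin 2) R) = !![0, -1; 1, 0] := by
  ext i j
  fin_cases i <;> fin_cases j <;> simp [hz, transvection_coe, Matrix.mul_apply, Fin.sum_univ_two,
    CharTwo.neg_eq, CharTwo.add_self_eq_zero]
  linear_combination (b ^ 2 + b) * CharTwo.two_eq_zero (R := R)

end CommRing

variable {F : Type*} [Field F]

theorem diag2_mul_transvection_mul_inv {a : F} (ha : a ≠ 0) (t : F) :
    diag2 a ha * transvection zero_ne_one t * (diag2 a ha)⁻¹ =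
      transvection zero_ne_one (a ^ 2 * t) := by
  calc _ = ⁅diag2 a ha, transvection zero_ne_one t⁆ * transvection zero_ne_one t := by group
    _ = _ := by
      rw [commutator_diag2_transvection a ha t _ rfl, ← transvection_add]
      congr 1
      ring

theorem eq_top_of_transvection_mem {H : Subgroup SL(2, F)}
    (h01 : ∀ t, transvection zero_ne_one t ∈ H) (h10 : ∀ t, transvection one_ne_zero t ∈ H) :
    H = ⊤ := by
  refine (Subgroup.eq_top_iff' H).mpr fun g ↦ SL2.transvection_induction (· ∈ H) ?_
    (fun _ _ ↦ H.mul_mem) g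
  intro i j hij t
  fin_cases i <;> fin_cases j
  all_goals first | exact absurd rfl hij | exact h01 t | exact h10 t

theorem transvection_sq_pow_mem {H : Subgroup SL(2, F)} {a : F} (ha : a ≠ 0)
    (hx : diag2 a ha ∈ H) (h1 : transvection zero_ne_one (1 : F) ∈ H) (n : ℕ) :
    transvection zero_ne_one ((a ^ 2) ^ n) ∈ H := by
  induction n with
  | zero => simpa using h1
  | succ n ih =>
    rw [pow_succ', ← diag2_mul_transvection_mul_inv ha]
    exact H.mul_mem (H.mul_mem hx ih) (H.inv_mem hx)

theorem transvection_mem_of_diag2_mem [Fintype F] (hchar : ringChar F = 2)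
    {H : Subgroup SL(2, F)} {a : F} (ha : a ≠ 0) (hgen : orderOf a = Fintype.card F - 1)
    (hx : diag2 a ha ∈ H) (h1 : transvection zero_ne_one (1 : F) ∈ H) (t : F) :
    transvection zero_ne_one t ∈ H := by
  rcases eq_or_ne t 0 with rfl | ht
  · simp
  obtain ⟨s, rfl⟩ := FiniteField.isSquare_of_char_two hchar t
  obtain ⟨n, rfl⟩ :=
    FiniteField.exists_pow_eq_of_orderOf_eq_card_sub_one hgen (left_ne_zero_of_mul ht)
  convert transvection_sq_pow_mem ha hx h1 n using 2
  ring

end Matrix.SpecialLinearGroup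

theorem twisted_stmt9_general {F : Type*} [Field F] [Fintype F] {f : ℕ}
    (hF : Fintype.card F = 2 ^ f) (a : F) (ha : a ≠ 0)
    (hgen : orderOf a = 2 ^ f - 1) (b : F)
    (x y z : Matrix.SpecialLinearGroup (Fin 2) F)
    (hx : (x : Matrix (Fin 2) (Fin 2) F) = !![a, 0; 0, a⁻¹])
    (hy : (y : Matrix (Fin 2) (Fin 2) F) = !![1, 1; 0, 1])
    (hz : (z : Matrix (Fin 2) (Fin 2) F) = !![b, b ^ 2 + b + 1; 1, b + 1]) :
    Subgroup.closure {x, y, z} = ⊤ := by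
  have : CharP F 2 := charP_of_card_eq_prime_pow hF
  set H := Subgroup.closure ({x, y, z} : Set SL(2, F))
  have hxH : diag2 a ha ∈ H := by
    rw [← Subtype.ext (hx.trans (diag2_coe' ha).symm)]
    exact Subgroup.subset_closure (by simp)
  have hyH : transvection zero_ne_one (1 : F) ∈ H := by
    have hy' : y = transvection zero_ne_one 1 := by
      ext i j
      fin_cases i <;> fin_cases j <;> simp [hy, transvection_coe]
    exact hy' ▸ Subgroup.subset_closure (by simp)
  have hupper : ∀ t, transvection zero_ne_one t ∈ H :=
    transvection_mem_of_diag2_mem (ringChar.eq F 2) ha (hF ▸ hgen) hxH hyH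
  have hweyl : transvection zero_ne_one b * z * transvection zero_ne_one (b + 1) ∈ H :=
    H.mul_mem (H.mul_mem (hupper b) (Subgroup.subset_closure (by simp))) (hupper _)
  refine eq_top_of_transvection_mem hupper fun t ↦ ?_
  rw [← neg_neg t, ← mul_transvection_mul_inv_of_coe_eq (coe_transvection_mul_mul_transvection hz)]
  exact H.mul_mem (H.mul_mem hweyl (hupper _)) (H.inv_mem hweyl)

/-- Let `F` be the field of order `2^f` with `f ≥ 2`, `a` a generator of
`F*`, and `b = (1+a²)⁻¹`. Then `SL(2,F)` is generated by the matrices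
`x = [[a,0],[0,a⁻¹]]`, `y = [[1,1],[0,1]]` and `z = [[b,b²+b+1],[1,b+1]]`. -/
theorem twisted_stmt9 {F : Type*} [Field F] [Fintype F] {f : ℕ} (hf : 2 ≤ f)
    (hF : Fintype.card F = 2 ^ f) (a : F) (ha : a ≠ 0)
    (hgen : orderOf a = 2 ^ f - 1) (b : F) (hb : b = (1 + a ^ 2)⁻¹)
    (x y z : Matrix.SpecialLinearGroup (Fin 2) F)
    (hx : (x : Matrix (Fin 2) (Fin 2) F) = !![a, 0; 0, a⁻¹])
    (hy : (y : Matrix (Fin 2) (Fin 2) F) = !![1, 1; 0, 1])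
    (hz : (z : Matrix (Fin 2) (Fin 2) F) = !![b, b ^ 2 + b + 1; 1, b + 1]) :
    Subgroup.closure {x, y, z} = ⊤ :=
  twisted_stmt9_general hF a ha hgen b x y z hx hy hz
end

section
/- Let f ≥ 2, F the finite field of order 2^f, a a generator of F*, and b = (1+a²)⁻¹. For w ∈ F set u = wa + wb + w and v = w + wa, and define the 3×3 matrices over F: X = [[1,0,0],[0,a,0],[0,0,a⁻¹]], Y_w = [[1,0,v],[0,1,1],[0,0,1]], Z_w = [[1,w,u],[0,b,b²+b+1],[0,1,b+1]], each of determinant 1. Let S_w be the subgroup of SL(3,F) generated by X, Y_w and Z_w. Then S_w is isomorphic to SL(2,F). -/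
/-!
In characteristic 2 the map `γ(A) = (√(A₀₀A₁₀), √(A₀₁A₁₁))` is a crossed homomorphism
`SL(2,F) → F²`, i.e. `γ(AB) = γ(A)B + γ(B)`, so `A ↦ [[1, v γ(A)], [0, A]]` is an embedding of
`SL(2,F)` into `SL(3,F)` for every `v`. With `v = w + wa` and `c = (1+a)⁻¹`, so that `b = c²`,
the matrices `X`, `Y_w`, `Z_w` are the images of `diag(a, a⁻¹)`, `[[1,1],[0,1]]` and
`[[b, b²+b+1],[1, b+1]]`. These generate `SL(2,F)`: conjugating `[[1,1],[0,1]]` by powers of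
`diag(a, a⁻¹)` gives every upper transvection because every element of `F` is a square, the
third generator then yields a lower transvection and hence all of them, and upper and lower
transvections generate `SL(2,F)`.
-/

theorem FiniteField.ringChar_eq_two_of_card_eq_two_pow {F : Type*} [Field F] [Fintype F]
    {f : ℕ} (hf : f ≠ 0) (hF : Fintype.card F = 2 ^ f) : ringChar F = 2 :=
  FiniteField.even_card_iff_char_two.mpr <| by simp [hF, Nat.pow_mod, hf]

theorem FiniteField.zpowers_mk0_eq_top_of_orderOf_eq {F : Type*} [Field F] [Fintype F]
    {a : F} (ha : a ≠ 0) (h : orderOf a = Fintype.card F - 1) :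
    Subgroup.zpowers (Units.mk0 a ha) = ⊤ :=
  Subgroup.eq_top_of_card_eq _ <| by
    rw [Nat.card_zpowers, ← orderOf_units, Units.val_mk0, h, Nat.card_units,
      Nat.card_eq_fintype_card]

theorem MonoidHom.nonempty_closure_image_mulEquiv {G H : Type*} [Group G] [Group H]
    {ρ : G →* H} (hρ : Function.Injective ρ) {S : Set G} (hS : Subgroup.closure S = ⊤) :
    Nonempty (Subgroup.closure (ρ '' S) ≃* G) :=
  ⟨(MulEquiv.subgroupCongr (by rw [← MonoidHom.map_closure, hS])).trans
    ((Subgroup.equivMapOfInjective ⊤ ρ hρ).symm.trans Subgroup.topEquiv)⟩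

open Matrix

namespace SL2

variable {F : Type*} [Field F]

def upper (t : F) : SpecialLinearGroup (Fin 2) F :=
  ⟨!![1, t; 0, 1], by simp [det_fin_two_of]⟩

def lower (t : F) : SpecialLinearGroup (Fin 2) F :=
  ⟨!![1, 0; t, 1], by simp [det_fin_two_of]⟩

def diag (u : Fˣ) : SpecialLinearGroup (Fin 2) F :=
  ⟨!![(u : F), 0; 0, ((u⁻¹ : Fˣ) : F)], by simp [det_fin_two_of]⟩

@[simp] lemma coe_upper (t : F) : (upper t : Matrix (Fin 2) (Fin 2) F) = !![1, t; 0, 1] := rfl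

@[simp] lemma coe_lower (t : F) : (lower t : Matrix (Fin 2) (Fin 2) F) = !![1, 0; t, 1] := rfl

@[simp] lemma coe_diag (u : Fˣ) :
    (diag u : Matrix (Fin 2) (Fin 2) F) = !![(u : F), 0; 0, ((u⁻¹ : Fˣ) : F)] := rfl

def diagHom : Fˣ →* SpecialLinearGroup (Fin 2) F where
  toFun := diag
  map_one' := by ext i j; fin_cases i <;> fin_cases j <;> simp
  map_mul' u v := by
    ext i j; fin_cases i <;> fin_cases j <;> simp [mul_apply, Fin.sum_univ_two, mul_comm]

@[simp] lemma diagHom_apply (u : Fˣ) : diagHom u = (diag u : SpecialLinearGroup (Fin 2) F) := rfl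

lemma upper_zero : upper (0 : F) = 1 := by
  ext i j; fin_cases i <;> fin_cases j <;> simp

lemma lower_zero : lower (0 : F) = 1 := by
  ext i j; fin_cases i <;> fin_cases j <;> simp

lemma lower_mul_lower (s t : F) : lower s * lower t = lower (s + t) := by
  ext i j; fin_cases i <;> fin_cases j <;> simp [mul_apply, Fin.sum_univ_two, add_comm]

lemma diagHom_mul_upper_mul_inv (u : Fˣ) (t : F) :
    diagHom u * upper t * (diagHom u)⁻¹ = upper ((u : F) ^ 2 * t) := by
  rw [← map_inv]
  ext i j; fin_cases i <;> fin_cases j <;> simp [mul_apply, Fin.sum_univ_two]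
  ring

lemma diagHom_inv_mul_lower_mul (u : Fˣ) (t : F) :
    (diagHom u)⁻¹ * lower t * diagHom u = lower ((u : F) ^ 2 * t) := by
  rw [← map_inv]
  ext i j; fin_cases i <;> fin_cases j <;> simp [mul_apply, Fin.sum_univ_two]
  ring

lemma eq_upper_mul_lower_mul_upper (A : SpecialLinearGroup (Fin 2) F) (h : A 1 0 ≠ 0) :
    A = upper ((A 0 0 - 1) / A 1 0) * lower (A 1 0) * upper ((A 1 1 - 1) / A 1 0) := by
  have hdet : A 0 0 * A 1 1 - A 0 1 * A 1 0 = 1 := by rw [← det_fin_two]; exact A.2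
  ext i j; fin_cases i <;> fin_cases j <;> simp [mul_apply, Fin.sum_univ_two] <;> field_simp
  · ring
  · linear_combination -hdet
  · ring

lemma eq_top_of_forall_upper_mem_of_forall_lower_mem
    {H : Subgroup (SpecialLinearGroup (Fin 2) F)} (hu : ∀ t, upper t ∈ H)
    (hl : ∀ t, lower t ∈ H) : H = ⊤ := by
  have hmem : ∀ A : SpecialLinearGroup (Fin 2) F, A 1 0 ≠ 0 → A ∈ H := fun A h => by
    rw [eq_upper_mul_lower_mul_upper A h]
    exact mul_mem (mul_mem (hu _) (hl _)) (hu _)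
  refine (Subgroup.eq_top_iff' H).mpr fun A => ?_
  by_cases h : A 1 0 = 0
  · -- `A` is upper triangular, so `lower 1 * A` has the nonzero lower-left entry `A 0 0`
    have h00 : A 0 0 ≠ 0 := by
      have hdet := A.2
      rw [det_fin_two, h] at hdet
      rintro h0
      simp [h0] at hdet
    have hA : A = lower (-1) * (lower 1 * A) := by
      rw [← mul_assoc, lower_mul_lower, neg_add_cancel, lower_zero, one_mul]
    rw [hA]
    refine mul_mem (hl _) (hmem _ ?_)
    simpa [mul_apply, Fin.sum_univ_two, h] using h00
  · exact hmem A h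

lemma exists_unit_sq_eq {t : F} (hsq : IsSquare t) (ht : t ≠ 0) :
    ∃ u : Fˣ, (u : F) ^ 2 = t := by
  obtain ⟨r, rfl⟩ := hsq
  exact ⟨Units.mk0 r (by rintro rfl; simp at ht), by simp [sq]⟩

theorem closure_diagHom_upper_eq_top {α : Fˣ} (hα : Subgroup.zpowers α = ⊤)
    (hsq : ∀ t : F, IsSquare t) {g : SpecialLinearGroup (Fin 2) F} (hg : g 1 0 ≠ 0) :
    Subgroup.closure {diagHom α, upper 1, g} = ⊤ := by
  set H := Subgroup.closure {diagHom α, upper 1, g}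
  have hdiag : ∀ u, diagHom u ∈ H := by
    have : (Subgroup.zpowers α).map diagHom ≤ H := by
      rw [MonoidHom.map_zpowers, Subgroup.zpowers_le]
      exact Subgroup.subset_closure (by simp)
    exact fun u => this (Subgroup.mem_map_of_mem _ (hα ▸ Subgroup.mem_top u))
  have hupper : ∀ t, upper t ∈ H := by
    intro t
    rcases eq_or_ne t 0 with rfl | ht
    · rw [upper_zero]; exact one_mem H
    obtain ⟨u, rfl⟩ := exists_unit_sq_eq (hsq t) ht
    rw [← mul_one ((u : F) ^ 2), ← diagHom_mul_upper_mul_inv]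
    exact mul_mem (mul_mem (hdiag u) (Subgroup.subset_closure (by simp))) (inv_mem (hdiag u))
  have hlower_g : lower (g 1 0) ∈ H := by
    have hg_mem : g ∈ H := Subgroup.subset_closure (by simp)
    rw [eq_upper_mul_lower_mul_upper g hg] at hg_mem
    simpa [mul_assoc] using mul_mem (mul_mem (inv_mem (hupper ((g 0 0 - 1) / g 1 0))) hg_mem)
      (inv_mem (hupper ((g 1 1 - 1) / g 1 0)))
  refine eq_top_of_forall_upper_mem_of_forall_lower_mem hupper fun t => ?_
  rcases eq_or_ne t 0 with rfl | ht
  · rw [lower_zero]; exact one_mem H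
  obtain ⟨u, hu⟩ := exists_unit_sq_eq (hsq (t / g 1 0)) (div_ne_zero ht hg)
  rw [← div_mul_cancel₀ t hg, ← hu, ← diagHom_inv_mul_lower_mul]
  exact mul_mem (mul_mem (inv_mem (hdiag u)) hlower_g) (hdiag u)

section CharTwo

variable [CharP F 2] [PerfectRing F 2]

noncomputable def sqrtCocycle (A : Matrix (Fin 2) (Fin 2) F) (j : Fin 2) : F :=
  (frobeniusEquiv F 2).symm (A 0 j * A 1 j)

/- Squaring is injective and additive in characteristic 2, so the identity may be checked after
squaring, where it reduces to `det A = 1`. -/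
lemma sqrtCocycle_mul {A : Matrix (Fin 2) (Fin 2) F} (hA : A.det = 1)
    (B : Matrix (Fin 2) (Fin 2) F) (j : Fin 2) :
    sqrtCocycle (A * B) j =
      sqrtCocycle A 0 * B 0 j + sqrtCocycle A 1 * B 1 j + sqrtCocycle B j := by
  apply (frobeniusEquiv F 2).injective
  simp only [sqrtCocycle, map_add, map_mul, RingEquiv.apply_symm_apply, frobeniusEquiv_apply,
    frobenius_def]
  rw [det_fin_two] at hA
  simp only [mul_apply, Fin.sum_univ_two]
  linear_combination
    B 0 j * B 1 j * hA + A 0 1 * A 1 0 * B 0 j * B 1 j * CharTwo.two_eq_zero (R := F)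

lemma sqrtCocycle_one (j : Fin 2) : sqrtCocycle (1 : Matrix (Fin 2) (Fin 2) F) j = 0 := by
  fin_cases j <;> simp [sqrtCocycle]

noncomputable def twistedMatrix (v : F) (A : Matrix (Fin 2) (Fin 2) F) :
    Matrix (Fin 3) (Fin 3) F :=
  !![1, v * sqrtCocycle A 0, v * sqrtCocycle A 1;
     0, A 0 0, A 0 1;
     0, A 1 0, A 1 1]

lemma det_twistedMatrix (v : F) (A : Matrix (Fin 2) (Fin 2) F) :
    (twistedMatrix v A).det = A.det := by
  simp [twistedMatrix, det_fin_three, det_fin_two]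

lemma twistedMatrix_one (v : F) : twistedMatrix v (1 : Matrix (Fin 2) (Fin 2) F) = 1 := by
  ext i j; fin_cases i <;> fin_cases j <;> simp [twistedMatrix, sqrtCocycle_one, one_apply]

lemma twistedMatrix_mul (v : F) {A : Matrix (Fin 2) (Fin 2) F} (hA : A.det = 1)
    (B : Matrix (Fin 2) (Fin 2) F) :
    twistedMatrix v (A * B) = twistedMatrix v A * twistedMatrix v B := by
  simp only [twistedMatrix, sqrtCocycle_mul hA]
  ext i j; fin_cases i <;> fin_cases j <;> simp [mul_apply, Fin.sum_univ_succ] <;> ring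

lemma submatrix_succ_twistedMatrix (v : F) (A : Matrix (Fin 2) (Fin 2) F) :
    (twistedMatrix v A).submatrix Fin.succ Fin.succ = A := by
  ext i j; fin_cases i <;> fin_cases j <;> rfl

noncomputable def twistedEmbedding (v : F) :
    SpecialLinearGroup (Fin 2) F →* SpecialLinearGroup (Fin 3) F where
  toFun A := ⟨twistedMatrix v A, by rw [det_twistedMatrix]; exact A.2⟩
  map_one' := Subtype.ext (twistedMatrix_one v)
  map_mul' A B := Subtype.ext (twistedMatrix_mul v A.2 B)

@[simp] lemma coe_twistedEmbedding (v : F) (A : SpecialLinearGroup (Fin 2) F) :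
    (twistedEmbedding v A : Matrix (Fin 3) (Fin 3) F) = twistedMatrix v A := rfl

lemma twistedEmbedding_injective (v : F) : Function.Injective (twistedEmbedding (F := F) v) :=
  fun A B h => Subtype.ext <| by
    rw [← submatrix_succ_twistedMatrix v A, ← submatrix_succ_twistedMatrix v B,
      ← coe_twistedEmbedding, ← coe_twistedEmbedding, h]

lemma twistedMatrix_diagonal (v x y : F) :
    twistedMatrix v !![x, 0; 0, y] = !![1, 0, 0; 0, x, 0; 0, 0, y] := by
  ext i j; fin_cases i <;> fin_cases j <;> simp [twistedMatrix, sqrtCocycle]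

lemma twistedMatrix_upper_one (v : F) :
    twistedMatrix v !![1, 1; 0, 1] = !![1, 0, v; 0, 1, 1; 0, 0, 1] := by
  ext i j; fin_cases i <;> fin_cases j <;> simp [twistedMatrix, sqrtCocycle]

lemma twistedMatrix_sq (v c : F) :
    twistedMatrix v !![c ^ 2, (c ^ 2) ^ 2 + c ^ 2 + 1; 1, c ^ 2 + 1]
      = !![1, v * c, v * (c ^ 3 + 1); 0, c ^ 2, (c ^ 2) ^ 2 + c ^ 2 + 1; 0, 1, c ^ 2 + 1] := by
  have hsqrt : ∀ x : F, (frobeniusEquiv F 2).symm (x ^ 2) = x :=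
    frobeniusEquiv_symm_apply_frobenius F 2
  have hprod : ((c ^ 2) ^ 2 + c ^ 2 + 1) * (c ^ 2 + 1) = (c ^ 3 + 1) ^ 2 := by
    linear_combination (c ^ 4 + c ^ 2 - c ^ 3) * CharTwo.two_eq_zero (R := F)
  ext i j; fin_cases i <;> fin_cases j <;> simp [twistedMatrix, sqrtCocycle, hprod, hsqrt]

end CharTwo

end SL2

/-- Let `F` be the field of order `2^f` with `f ≥ 2`, `a` a generator of
`F*`, `b = (1+a²)⁻¹`, and for `w ∈ F` set `u = wa+wb+w`, `v = w+wa`. Then the subgroup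
`S_w` of `SL(3,F)` generated by `X = [[1,0,0],[0,a,0],[0,0,a⁻¹]]`,
`Y_w = [[1,0,v],[0,1,1],[0,0,1]]` and `Z_w = [[1,w,u],[0,b,b²+b+1],[0,1,b+1]]` is
isomorphic to `SL(2,F)`. -/
theorem twisted_stmt10 {F : Type*} [Field F] [Fintype F] {f : ℕ} (hf : 2 ≤ f)
    (hF : Fintype.card F = 2 ^ f) (a : F) (ha : a ≠ 0)
    (hgen : orderOf a = 2 ^ f - 1) (b : F) (hb : b = (1 + a ^ 2)⁻¹) (w : F)
    (X Y Z : Matrix.SpecialLinearGroup (Fin 3) F)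
    (hX : (X : Matrix (Fin 3) (Fin 3) F) = !![1, 0, 0; 0, a, 0; 0, 0, a⁻¹])
    (hY : (Y : Matrix (Fin 3) (Fin 3) F) = !![1, 0, w + w * a; 0, 1, 1; 0, 0, 1])
    (hZ : (Z : Matrix (Fin 3) (Fin 3) F)
        = !![1, w, w * a + w * b + w; 0, b, b ^ 2 + b + 1; 0, 1, b + 1]) :
    Nonempty (↥(Subgroup.closure {X, Y, Z}) ≃* Matrix.SpecialLinearGroup (Fin 2) F) := by
  have hchar := FiniteField.ringChar_eq_two_of_card_eq_two_pow (by omega) hF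
  have : CharP F 2 := ringChar.of_eq hchar
  have ha1 : 1 + a ≠ 0 := fun h => by
    have : 2 ^ 2 ≤ 2 ^ f := Nat.pow_le_pow_right two_pos hf
    rw [← CharTwo.add_eq_zero.mp h, orderOf_one] at hgen
    omega
  obtain ⟨c, hac, rfl⟩ : ∃ c, (1 + a) * c = 1 ∧ b = c ^ 2 :=
    ⟨(1 + a)⁻¹, mul_inv_cancel₀ ha1, by rw [hb, inv_pow, CharTwo.add_sq, one_pow]⟩
  let g : SpecialLinearGroup (Fin 2) F :=
    ⟨!![c ^ 2, (c ^ 2) ^ 2 + c ^ 2 + 1; 1, c ^ 2 + 1], by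
      rw [det_fin_two_of]; linear_combination -CharTwo.two_eq_zero (R := F)⟩
  let ρ := SL2.twistedEmbedding (w + w * a)
  have hX' : ρ (SL2.diagHom (Units.mk0 a ha)) = X := Subtype.ext <| by
    simp [ρ, SL2.twistedMatrix_diagonal, hX]
  have hY' : ρ (SL2.upper 1) = Y := Subtype.ext <| by
    simp [ρ, SL2.twistedMatrix_upper_one, hY]
  have hZ' : ρ g = Z := Subtype.ext <| by
    rw [SL2.coe_twistedEmbedding, SL2.twistedMatrix_sq, hZ,
      show (w + w * a) * c = w by linear_combination w * hac,
      show (w + w * a) * (c ^ 3 + 1) = w * a + w * c ^ 2 + w by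
        linear_combination w * c ^ 2 * hac]
  have htop := SL2.closure_diagHom_upper_eq_top
    (FiniteField.zpowers_mk0_eq_top_of_orderOf_eq ha (by rw [hgen, hF]))
    (FiniteField.isSquare_of_char_two hchar) (g := g) one_ne_zero
  have := MonoidHom.nonempty_closure_image_mulEquiv
    (SL2.twistedEmbedding_injective (w + w * a)) htop
  rwa [Set.image_insert_eq, Set.image_insert_eq, Set.image_singleton, hX', hY', hZ'] at this
end

section
/- With F, a, b, S_w as in the standing setup, for n = (v₁,v₂) ∈ F² let e(n) = [[1,v₁,v₂],[0,1,0],[0,0,1]] ∈ SL(3,F), let E = {e(n) : n ∈ F²}, and let G be the subgroup of SL(3,F) generated by E together with X, Y₀ and Z₀. Then for every w ∈ F: E is a subgroup of G normalized by S_w, E ∩ S_w = {1}, and G = E·S_w; that is, S_w is a complement of the normal subgroup E in G. -/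
/-- The matrix `X = [[1,0,0],[0,a,0],[0,0,a⁻¹]]`. -/
def Xmat (F : Type*) [Field F] (a : F) : Matrix (Fin 3) (Fin 3) F :=
  !![1, 0, 0; 0, a, 0; 0, 0, a⁻¹]

/-- The matrix `Y_w = [[1,0,v],[0,1,1],[0,0,1]]` with `v = w + wa`. -/
def Ymat (F : Type*) [Field F] (a w : F) : Matrix (Fin 3) (Fin 3) F :=
  !![1, 0, w + w * a; 0, 1, 1; 0, 0, 1]

/-- The matrix `Z_w = [[1,w,u],[0,b,b²+b+1],[0,1,b+1]]` with `u = wa + wb + w`. -/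
def Zmat (F : Type*) [Field F] (a b w : F) : Matrix (Fin 3) (Fin 3) F :=
  !![1, w, w * a + w * b + w; 0, b, b ^ 2 + b + 1; 0, 1, b + 1]

/-- The matrix `e(n) = [[1,v₁,v₂],[0,1,0],[0,0,1]]` for `n = (v₁,v₂) ∈ F²`. -/
def eMat (F : Type*) [Field F] (v₁ v₂ : F) : Matrix (Fin 3) (Fin 3) F :=
  !![1, v₁, v₂; 0, 1, 0; 0, 0, 1]

/-- The subgroup `S_w` of `SL(3,F)` generated by `X`, `Y_w` and `Z_w`. -/
def Ssub (F : Type*) [Field F] (a b w : F) :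
    Subgroup (Matrix.SpecialLinearGroup (Fin 3) F) :=
  Subgroup.closure {g | (g : Matrix (Fin 3) (Fin 3) F) = Xmat F a ∨
    (g : Matrix (Fin 3) (Fin 3) F) = Ymat F a w ∨
    (g : Matrix (Fin 3) (Fin 3) F) = Zmat F a b w}

/-- The set `E = {e(n) : n ∈ F²}` inside `SL(3,F)`. -/
def ESet (F : Type*) [Field F] : Set (Matrix.SpecialLinearGroup (Fin 3) F) :=
  {g | ∃ v₁ v₂ : F, (g : Matrix (Fin 3) (Fin 3) F) = eMat F v₁ v₂}

/-- The subgroup `G` of `SL(3,F)` generated by `E` together with `X`, `Y₀` and `Z₀`. -/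
def Gsub (F : Type*) [Field F] (a b : F) :
    Subgroup (Matrix.SpecialLinearGroup (Fin 3) F) :=
  Subgroup.closure (ESet F ∪ {g | (g : Matrix (Fin 3) (Fin 3) F) = Xmat F a ∨
    (g : Matrix (Fin 3) (Fin 3) F) = Ymat F a 0 ∨
    (g : Matrix (Fin 3) (Fin 3) F) = Zmat F a b 0})

/-!
In characteristic 2 the map sending `M = [[α, β], [γ, δ]]` to
`[[1, k αγ, k βδ], [0, α², β²], [0, γ², δ²]]` is a homomorphism `SL(2,F) → SL(3,F)` for every
`k`: the lower block is the Frobenius image of `M`, and the top row is a cocycle because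
`αδ + βγ = 1`. Writing `a = r²` and `s = (1 + a)⁻¹` (so `b = s²`), the generators `X`, `Y_w`,
`Z_w` are the images, for `k = w(1 + a)`, of `diag(r, r⁻¹)`, `[[1, 1], [0, 1]]` and
`[[s, s² + s + 1], [1, s + 1]]`. So `S_w` lies in the image of this homomorphism, which meets `E`
trivially. All generators fix the first basis vector, hence normalize `E`, and `Y_w`, `Z_w`
differ from `Y₀`, `Z₀` by elements of `E`; therefore `G = E ⊔ S_w = E · S_w`.
-/

section TwistedEmbedding

open Matrix Subgroup

variable {F : Type*} [Field F]

def eSL (v₁ v₂ : F) : SpecialLinearGroup (Fin 3) F :=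
  ⟨eMat F v₁ v₂, by simp [eMat, det_fin_three]⟩

@[simp]
lemma coe_eSL (v₁ v₂ : F) : (eSL v₁ v₂ : Matrix (Fin 3) (Fin 3) F) = eMat F v₁ v₂ := rfl

lemma eMat_mul_eMat (v₁ v₂ u₁ u₂ : F) :
    eMat F v₁ v₂ * eMat F u₁ u₂ = eMat F (v₁ + u₁) (v₂ + u₂) := by
  ext i j
  fin_cases i <;> fin_cases j <;> simp [eMat, mul_apply, Fin.sum_univ_three, add_comm]

lemma eSL_mul_eSL (v₁ v₂ u₁ u₂ : F) : eSL v₁ v₂ * eSL u₁ u₂ = eSL (v₁ + u₁) (v₂ + u₂) :=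
  Subtype.ext (eMat_mul_eMat v₁ v₂ u₁ u₂)

lemma eMat_zero : eMat F (0 : F) 0 = 1 := by
  ext i j
  fin_cases i <;> fin_cases j <;> simp [eMat]

lemma eSL_zero : eSL (0 : F) 0 = 1 := Subtype.ext eMat_zero

lemma eSL_inv (v₁ v₂ : F) : (eSL v₁ v₂)⁻¹ = eSL (-v₁) (-v₂) :=
  inv_eq_of_mul_eq_one_right (by rw [eSL_mul_eSL, add_neg_cancel, add_neg_cancel, eSL_zero])

variable (F) in
def Esub : Subgroup (SpecialLinearGroup (Fin 3) F) where
  carrier := {x | ∃ v₁ v₂, x = eSL v₁ v₂}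
  one_mem' := ⟨0, 0, eSL_zero.symm⟩
  mul_mem' := by
    rintro _ _ ⟨v₁, v₂, rfl⟩ ⟨u₁, u₂, rfl⟩
    exact ⟨_, _, eSL_mul_eSL v₁ v₂ u₁ u₂⟩
  inv_mem' := by
    rintro _ ⟨v₁, v₂, rfl⟩
    exact ⟨_, _, eSL_inv v₁ v₂⟩

lemma eSL_mem_Esub (v₁ v₂ : F) : eSL v₁ v₂ ∈ Esub F := ⟨v₁, v₂, rfl⟩

lemma coe_Esub : (Esub F : Set (SpecialLinearGroup (Fin 3) F)) = ESet F := by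
  ext x
  exact exists₂_congr fun _ _ => Subtype.ext_iff

lemma eMat_mul_block (u₁ u₂ m₁ m₂ A B C D : F) :
    eMat F u₁ u₂ * !![1, m₁, m₂; 0, A, B; 0, C, D] =
      !![1, m₁, m₂; 0, A, B; 0, C, D] * eMat F (u₁ * A + u₂ * C) (u₁ * B + u₂ * D) := by
  ext i j
  fin_cases i <;> fin_cases j <;> simp [eMat, mul_apply, Fin.sum_univ_three] <;> ring

lemma mem_normalizer_Esub_of_coe_eq {g : SpecialLinearGroup (Fin 3) F} {m₁ m₂ A B C D : F}
    (hg : (g : Matrix (Fin 3) (Fin 3) F) = !![1, m₁, m₂; 0, A, B; 0, C, D]) :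
    g ∈ normalizer (Esub F : Set (SpecialLinearGroup (Fin 3) F)) := by
  have hdet : A * D - B * C = 1 := by
    simpa [hg, det_fin_three] using g.2
  have key (u₁ u₂ : F) : eSL u₁ u₂ * g = g * eSL (u₁ * A + u₂ * C) (u₁ * B + u₂ * D) :=
    Subtype.ext (by simp [hg, eMat_mul_block])
  refine mem_normalizer_iff.mpr fun x => ⟨?_, ?_⟩
  · rintro ⟨v₁, v₂, rfl⟩
    refine ⟨v₁ * D - v₂ * C, v₂ * A - v₁ * B, ?_⟩
    rw [mul_inv_eq_iff_eq_mul, key]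
    congr 2
    · linear_combination -v₁ * hdet
    · linear_combination -v₂ * hdet
  · rintro ⟨u₁, u₂, h⟩
    rw [mul_inv_eq_iff_eq_mul, key] at h
    exact ⟨_, _, mul_left_cancel h⟩

lemma Ssub_le_normalizer_Esub (a b w : F) :
    Ssub F a b w ≤ normalizer (Esub F : Set (SpecialLinearGroup (Fin 3) F)) :=
  (closure_le _).mpr fun _ hg => by
    rcases hg with hg | hg | hg <;> exact mem_normalizer_Esub_of_coe_eq hg

lemma exists_coe_eq_and_eq_eSL_mul {g : SpecialLinearGroup (Fin 3) F} {v₁ v₂ : F}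
    {M : Matrix (Fin 3) (Fin 3) F} (hg : (g : Matrix (Fin 3) (Fin 3) F) = eMat F v₁ v₂ * M) :
    ∃ h : SpecialLinearGroup (Fin 3) F, (h : Matrix (Fin 3) (Fin 3) F) = M ∧ g = eSL v₁ v₂ * h :=
  ⟨(eSL v₁ v₂)⁻¹ * g, by simp [eSL_inv, hg, ← Matrix.mul_assoc, eMat_mul_eMat, eMat_zero],
    (mul_inv_cancel_left _ _).symm⟩

lemma Ymat_eq_eMat_mul (a w w' : F) :
    Ymat F a w = eMat F 0 ((w - w') + (w - w') * a) * Ymat F a w' := by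
  ext i j
  fin_cases i <;> fin_cases j <;> simp [eMat, Ymat, mul_apply, Fin.sum_univ_three]
  ring

lemma Zmat_eq_eMat_mul (a b w w' : F) :
    Zmat F a b w = eMat F ((w - w') * a) ((w - w') - (w - w') * a * b) * Zmat F a b w' := by
  ext i j
  fin_cases i <;> fin_cases j <;> simp [eMat, Zmat, mul_apply, Fin.sum_univ_three]
  ring

lemma Ssub_le_Esub_sup_Ssub (a b w w' : F) : Ssub F a b w ≤ Esub F ⊔ Ssub F a b w' := by
  refine (closure_le _).mpr fun g hg => ?_
  rcases hg with hg | hg | hg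
  · exact mem_sup_right (subset_closure (Or.inl hg))
  · obtain ⟨h, hh, rfl⟩ := exists_coe_eq_and_eq_eSL_mul (hg.trans (Ymat_eq_eMat_mul a w w'))
    exact mul_mem (mem_sup_left (eSL_mem_Esub _ _))
      (mem_sup_right (subset_closure (Or.inr (Or.inl hh))))
  · obtain ⟨h, hh, rfl⟩ := exists_coe_eq_and_eq_eSL_mul (hg.trans (Zmat_eq_eMat_mul a b w w'))
    exact mul_mem (mem_sup_left (eSL_mem_Esub _ _))
      (mem_sup_right (subset_closure (Or.inr (Or.inr hh))))

lemma Esub_sup_Ssub_eq (a b w w' : F) : Esub F ⊔ Ssub F a b w = Esub F ⊔ Ssub F a b w' :=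
  le_antisymm (sup_le le_sup_left (Ssub_le_Esub_sup_Ssub a b w w'))
    (sup_le le_sup_left (Ssub_le_Esub_sup_Ssub a b w' w))

lemma Gsub_eq_Esub_sup_Ssub (a b w : F) : Gsub F a b = Esub F ⊔ Ssub F a b w := by
  rw [← Esub_sup_Ssub_eq a b 0 w, Gsub, Subgroup.closure_union, ← coe_Esub, closure_eq]
  rfl

def twistMat (k : F) (M : Matrix (Fin 2) (Fin 2) F) : Matrix (Fin 3) (Fin 3) F :=
  !![1, k * (M 0 0 * M 1 0), k * (M 0 1 * M 1 1);
     0, M 0 0 ^ 2, M 0 1 ^ 2;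
     0, M 1 0 ^ 2, M 1 1 ^ 2]

lemma twistMat_one (k : F) : twistMat k 1 = 1 := by
  ext i j
  fin_cases i <;> fin_cases j <;> simp [twistMat]

section CharTwo

variable [CharP F 2]

lemma det_twistMat (k : F) (M : Matrix (Fin 2) (Fin 2) F) :
    (twistMat k M).det = M.det ^ 2 := by
  simp [twistMat, det_fin_three, det_fin_two]
  linear_combination (M 0 1 * M 1 0 * (M 0 0 * M 1 1 - M 0 1 * M 1 0)) *
    CharTwo.two_eq_zero (R := F)

lemma twistMat_mul (k : F) {M N : Matrix (Fin 2) (Fin 2) F} (hM : M.det = 1) :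
    twistMat k (M * N) = twistMat k M * twistMat k N := by
  rw [det_fin_two] at hM
  ext i j
  fin_cases i <;> fin_cases j <;>
    simp [twistMat, mul_apply, Fin.sum_univ_three, Fin.sum_univ_two, CharTwo.add_sq, mul_pow]
  · linear_combination (k * N 0 0 * N 1 0) * hM +
      (k * N 0 0 * N 1 0 * M 0 1 * M 1 0) * CharTwo.two_eq_zero (R := F)
  · linear_combination (k * N 0 1 * N 1 1) * hM +
      (k * N 0 1 * N 1 1 * M 0 1 * M 1 0) * CharTwo.two_eq_zero (R := F)

def twistHom (k : F) : SpecialLinearGroup (Fin 2) F →* SpecialLinearGroup (Fin 3) F where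
  toFun M := ⟨twistMat k M, by rw [det_twistMat, M.2, one_pow]⟩
  map_one' := Subtype.ext (twistMat_one k)
  map_mul' M N := Subtype.ext (twistMat_mul k M.2)

@[simp]
lemma coe_twistHom (k : F) (M : SpecialLinearGroup (Fin 2) F) :
    (twistHom k M : Matrix (Fin 3) (Fin 3) F) = twistMat k M := rfl

lemma Esub_inf_range_twistHom (k : F) : Esub F ⊓ (twistHom k).range = ⊥ := by
  refine eq_bot_iff.mpr fun x hx => ?_
  obtain ⟨⟨v₁, v₂, rfl⟩, M, hM⟩ := hx
  have entry (i j : Fin 3) : eMat F v₁ v₂ i j = twistMat k M i j := by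
    rw [← coe_eSL, ← hM, coe_twistHom]
  have h01 : M 0 1 = 0 := by simpa [eMat, twistMat] using (entry 1 2).symm
  have h10 : M 1 0 = 0 := by simpa [eMat, twistMat] using (entry 2 1).symm
  have hv₁ : v₁ = 0 := by simpa [eMat, twistMat, h10] using entry 0 1
  have hv₂ : v₂ = 0 := by simpa [eMat, twistMat, h01] using entry 0 2
  rw [mem_bot, hv₁, hv₂, eSL_zero]

lemma Ssub_le_range_twistHom {r s : F} (hr : r ≠ 0) (hs : (1 + r ^ 2) * s = 1) (w : F) :
    Ssub F (r ^ 2) (s ^ 2) w ≤ (twistHom (w + w * r ^ 2)).range := by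
  have mem_range {g : SpecialLinearGroup (Fin 3) F} (M : Matrix (Fin 2) (Fin 2) F)
      (hM : M.det = 1) (hg : (g : Matrix (Fin 3) (Fin 3) F) = twistMat (w + w * r ^ 2) M) :
      g ∈ (twistHom (w + w * r ^ 2)).range :=
    ⟨⟨M, hM⟩, Subtype.ext hg.symm⟩
  have h2 : (2 : F) = 0 := CharTwo.two_eq_zero
  refine (closure_le _).mpr fun g hg => ?_
  rcases hg with hg | hg | hg
  · refine mem_range !![r, 0; 0, r⁻¹] (by simp [det_fin_two, hr]) (hg.trans ?_)
    ext i j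
    fin_cases i <;> fin_cases j <;> simp [Xmat, twistMat]
  · refine mem_range !![1, 1; 0, 1] (by simp [det_fin_two]) (hg.trans ?_)
    ext i j
    fin_cases i <;> fin_cases j <;> simp [Ymat, twistMat]
  · refine mem_range !![s, s ^ 2 + s + 1; 1, s + 1]
      (by simp [det_fin_two]; linear_combination -h2) (hg.trans ?_)
    ext i j
    fin_cases i <;> fin_cases j <;> simp [Zmat, twistMat, CharTwo.add_sq]
    · linear_combination -w * hs
    · linear_combination -(w * s ^ 2) * hs - (w * (1 + r ^ 2) * (s ^ 2 + s)) * h2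

end CharTwo

end TwistedEmbedding

/-- For every `w ∈ F`, the set `E` is (the carrier of) a subgroup of `G`
normalized by `S_w` (indeed normal in `G`), `E ∩ S_w = 1`, and `G = E·S_w`; that is, `S_w`
is a complement of the normal subgroup `E` in `G`. -/
theorem twisted_stmt11 {F : Type*} [Field F] [Fintype F] {f : ℕ} (hf : 2 ≤ f)
    (hF : Fintype.card F = 2 ^ f) (a : F) (ha : a ≠ 0)
    (hgen : orderOf a = 2 ^ f - 1) (b : F) (hb : b = (1 + a ^ 2)⁻¹) (w : F) :
    ∃ E : Subgroup (Matrix.SpecialLinearGroup (Fin 3) F),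
      (E : Set (Matrix.SpecialLinearGroup (Fin 3) F)) = ESet F ∧
      E ≤ Gsub F a b ∧
      Ssub F a b w ≤ Gsub F a b ∧
      (∀ s ∈ Ssub F a b w, ∀ x ∈ E, s * x * s⁻¹ ∈ E) ∧
      (∀ g ∈ Gsub F a b, ∀ x ∈ E, g * x * g⁻¹ ∈ E) ∧
      (E ⊓ Ssub F a b w = ⊥) ∧
      (∀ g ∈ Gsub F a b, ∃ x ∈ E, ∃ s ∈ Ssub F a b w, g = x * s) := by
  have : CharP F 2 := charP_of_card_eq_prime_pow hF
  have ha₁ : a ≠ 1 := by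
    rintro rfl
    have := Nat.pow_le_pow_right two_pos hf
    rw [orderOf_one] at hgen
    omega
  obtain ⟨r, rfl⟩ : ∃ r, a = r ^ 2 :=
    (isSquare_of_charTwo' a).imp fun r hr => hr.trans (sq r).symm
  have hr : r ≠ 0 := by rintro rfl; simp at ha
  have hs : (1 + r ^ 2) * (1 + r ^ 2)⁻¹ = 1 :=
    mul_inv_cancel₀ fun h => ha₁ (by linear_combination h - CharTwo.two_eq_zero (R := F))
  obtain rfl : b = ((1 + r ^ 2)⁻¹) ^ 2 := by rw [hb, inv_pow, CharTwo.add_sq, one_pow]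
  have hG := Gsub_eq_Esub_sup_Ssub (r ^ 2) ((1 + r ^ 2)⁻¹ ^ 2) w
  have hSN := Ssub_le_normalizer_Esub (r ^ 2) ((1 + r ^ 2)⁻¹ ^ 2) w
  have hGN : Gsub F (r ^ 2) ((1 + r ^ 2)⁻¹ ^ 2) ≤ Subgroup.normalizer (Esub F : Set _) :=
    hG ▸ sup_le Subgroup.le_normalizer hSN
  refine ⟨Esub F, coe_Esub, hG ▸ le_sup_left, hG ▸ le_sup_right,
    fun s hsS x hx => (Subgroup.mem_normalizer_iff.mp (hSN hsS) x).mp hx,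
    fun g hg x hx => (Subgroup.mem_normalizer_iff.mp (hGN hg) x).mp hx,
    eq_bot_mono (inf_le_inf_left _ (Ssub_le_range_twistHom hr hs w))
      (Esub_inf_range_twistHom _), fun g hg => ?_⟩
  rw [hG, ← SetLike.mem_coe, Subgroup.coe_mul_of_right_le_normalizer_left _ _ hSN] at hg
  obtain ⟨x, hx, s, hsS, rfl⟩ := hg
  exact ⟨x, hx, s, hsS, rfl⟩
end

section
/- With F, a, b, S_w, E, G as in the standing setup, for all w, w' ∈ F with w ≠ w', the subgroups S_w and S_{w'} are not conjugate in G; that is, there is no g ∈ G with g⁻¹ S_w g = S_{w'}. -/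
open Matrix
open scoped MatrixGroups

section Cocycle

variable {F : Type*} [Field F]

def frobeniusCocycle (c : F) (M : Matrix (Fin 3) (Fin 3) F) : Fin 3 → F :=
  (fun j => M 0 j ^ 2 + c * (M 1 j * M 2 j)) - Pi.single 0 1

theorem frobeniusCocycle_one (c : F) : frobeniusCocycle c 1 = 0 := by
  ext j
  fin_cases j <;> simp [frobeniusCocycle]

variable (F) in
def firstColumnStabilizer : Subgroup SL(3, F) :=
  MulAction.stabilizer SL(3, F) (Pi.single 0 1 : Fin 3 → F)

theorem mem_firstColumnStabilizer_iff {g : SL(3, F)} :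
    g ∈ firstColumnStabilizer F ↔ g 0 0 = 1 ∧ g 1 0 = 0 ∧ g 2 0 = 0 := by
  change (g : Matrix (Fin 3) (Fin 3) F) *ᵥ Pi.single 0 1 = Pi.single 0 1 ↔ _
  simp [funext_iff, Fin.forall_fin_succ]

variable [CharP F 2]

theorem frobeniusCocycle_mul {g : SL(3, F)} (hg : g ∈ firstColumnStabilizer F) (c : F)
    (h : SL(3, F)) :
    frobeniusCocycle c ↑(g * h) =
      frobeniusCocycle c h + frobeniusCocycle c g ᵥ* (h : Matrix _ _ F).map (· ^ 2) := by
  obtain ⟨hg₀, hg₁, hg₂⟩ := mem_firstColumnStabilizer_iff.mp hg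
  have hdet := g.det_coe
  rw [det_fin_three, hg₁, hg₂, hg₀] at hdet
  ext j
  simp only [frobeniusCocycle, Matrix.SpecialLinearGroup.coe_mul, mul_apply, Fin.sum_univ_three,
    hg₀, one_mul, hg₁, zero_mul, zero_add, hg₂, Pi.sub_apply, Pi.add_apply, vecMul, dotProduct,
    map_apply, one_pow, mul_zero, add_zero, Pi.single_eq_same, sub_self, ne_eq, one_ne_zero,
    not_false_eq_true, Pi.single_eq_of_ne, sub_zero, Fin.reduceEq]
  linear_combination (norm := ring_nf) (c * h 1 j * h 2 j) * hdet
  simp [CharTwo.ofNat_eq_mod]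

def cocycleKernel (c : F) : Subgroup SL(3, F) where
  carrier := {g | g ∈ firstColumnStabilizer F ∧ frobeniusCocycle c g = 0}
  mul_mem' := fun ⟨hg, hg0⟩ ⟨hh, hh0⟩ =>
    ⟨mul_mem hg hh, by rw [frobeniusCocycle_mul hg, hg0, hh0, zero_vecMul, add_zero]⟩
  one_mem' := ⟨one_mem _, frobeniusCocycle_one c⟩
  inv_mem' := fun {g} ⟨hg, hg0⟩ => ⟨inv_mem hg, by
    simpa [hg0, frobeniusCocycle_one] using (frobeniusCocycle_mul hg c g⁻¹).symm⟩

theorem eq_of_mem_cocycleKernel {c c' : F} {g : SL(3, F)} (hc : g ∈ cocycleKernel c)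
    (hc' : g ∈ cocycleKernel c') {j : Fin 3} (hj : g 1 j * g 2 j ≠ 0) : c = c' := by
  have h := congrFun (hc.2.trans hc'.2.symm) j
  simp only [frobeniusCocycle, Pi.sub_apply, sub_left_inj, add_right_inj] at h
  exact mul_right_cancel₀ hj h

theorem frobeniusCocycle_vecMul_map_sq_of_mul_eq {c : F} {g x d : SL(3, F)}
    (hg : g ∈ firstColumnStabilizer F) (hx : x ∈ cocycleKernel c) (hd : d ∈ cocycleKernel c)
    (hxg : x * g = g * d) :
    frobeniusCocycle c g ᵥ* (d : Matrix _ _ F).map (· ^ 2) = frobeniusCocycle c g := by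
  have h := congrArg (fun k : SL(3, F) => frobeniusCocycle c k) hxg
  simp only [frobeniusCocycle_mul hx.1, frobeniusCocycle_mul hg, hx.2, hd.2, zero_vecMul,
    add_zero, zero_add] at h
  exact h.symm

theorem mem_cocycleKernel_of_conj_eq_Xmat {a c : F} (ha : a ^ 2 ≠ 1) {g x d : SL(3, F)}
    (hg : g ∈ firstColumnStabilizer F) (hx : x ∈ cocycleKernel c) (hd : d ∈ cocycleKernel c)
    (hdX : (d : Matrix _ _ F) = Xmat F a) (hconj : g⁻¹ * x * g = d) : g ∈ cocycleKernel c := by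
  have hfix := frobeniusCocycle_vecMul_map_sq_of_mul_eq hg hx hd (by rw [← hconj]; group)
  obtain ⟨hg₀, hg₁, hg₂⟩ := mem_firstColumnStabilizer_iff.mp hg
  have h₁ := congrFun hfix 1
  have h₂ := congrFun hfix 2
  simp only [vecMul, dotProduct, hdX, Xmat, map_apply, of_apply, cons_val', cons_val_one,
    cons_val_zero, cons_val_fin_one, Fin.sum_univ_three, ne_eq, OfNat.ofNat_ne_zero,
    not_false_eq_true, zero_pow, mul_zero, zero_add, cons_val, add_zero, inv_pow] at h₁ h₂
  refine ⟨hg, funext fun j => ?_⟩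
  fin_cases j
  · simp [frobeniusCocycle, hg₀, hg₁, hg₂]
  · simpa [ha] using mul_right_eq_self₀.mp h₁
  · simpa [ha] using mul_right_eq_self₀.mp h₂

end Cocycle

section Generators

variable {F : Type*} [Field F]

theorem Gsub_le_firstColumnStabilizer (a b : F) : Gsub F a b ≤ firstColumnStabilizer F := by
  rw [Gsub, Subgroup.closure_le]
  rintro s (⟨v₁, v₂, hs⟩ | hs | hs | hs) <;>
    simp [mem_firstColumnStabilizer_iff, hs, eMat, Xmat, Ymat, Zmat]

theorem det_Xmat {a : F} (ha : a ≠ 0) : (Xmat F a).det = 1 := by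
  simp [Xmat, det_fin_three, ha]

theorem frobeniusCocycle_Xmat (c a : F) : frobeniusCocycle c (Xmat F a) = 0 := by
  ext j
  fin_cases j <;> simp [frobeniusCocycle, Xmat]

variable [CharP F 2]

theorem det_Zmat (a b w : F) : (Zmat F a b w).det = 1 := by
  simp only [Zmat, det_fin_three, of_apply, cons_val', cons_val_zero, cons_val_one, cons_val_two,
    empty_val', cons_val_fin_one, head_cons, tail_cons, head_fin_const]
  linear_combination (norm := ring_nf)
  simp [CharTwo.ofNat_eq_mod]

theorem frobeniusCocycle_Ymat (a w : F) :
    frobeniusCocycle (w ^ 2 * (1 + a ^ 2)) (Ymat F a w) = 0 := by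
  have h : (w + w * a) ^ 2 + w ^ 2 * (1 + a ^ 2) = 0 := by
    linear_combination (norm := ring_nf)
    simp [CharTwo.ofNat_eq_mod]
  ext j
  fin_cases j <;> simp [frobeniusCocycle, Ymat, h]

theorem frobeniusCocycle_Zmat {a b : F} (hb : b * (1 + a ^ 2) = 1) (w : F) :
    frobeniusCocycle (w ^ 2 * (1 + a ^ 2)) (Zmat F a b w) = 0 := by
  have h₁ : w ^ 2 + w ^ 2 * (1 + a ^ 2) * b = 0 := by
    linear_combination (norm := ring_nf) w ^ 2 * hb
    simp [CharTwo.ofNat_eq_mod]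
  have h₂ : (w * a + w * b + w) ^ 2 + w ^ 2 * (1 + a ^ 2) * ((b ^ 2 + b + 1) * (b + 1)) = 0 := by
    linear_combination (norm := ring_nf) w ^ 2 * b ^ 2 * hb
    simp [CharTwo.ofNat_eq_mod]
  ext j
  fin_cases j <;> simp [frobeniusCocycle, Zmat, h₁, h₂]

theorem Ssub_le_cocycleKernel {a b : F} (hb : b * (1 + a ^ 2) = 1) (u : F) :
    Ssub F a b u ≤ cocycleKernel (u ^ 2 * (1 + a ^ 2)) := by
  rw [Ssub, Subgroup.closure_le]
  rintro s (hs | hs | hs) <;>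
    refine ⟨by simp [mem_firstColumnStabilizer_iff, hs, Xmat, Ymat, Zmat], ?_⟩ <;> rw [hs]
  · exact frobeniusCocycle_Xmat _ a
  · exact frobeniusCocycle_Ymat a u
  · exact frobeniusCocycle_Zmat hb u

end Generators

theorem charP_two_of_card_eq_two_pow {F : Type*} [Field F] [Fintype F] {f : ℕ} (hf : f ≠ 0)
    (hF : Fintype.card F = 2 ^ f) : CharP F 2 := by
  have h := Nat.cast_card_eq_zero F
  rw [hF, Nat.cast_pow, Nat.cast_ofNat] at h
  exact CharTwo.of_one_ne_zero_of_two_eq_zero one_ne_zero (pow_eq_zero_iff hf |>.mp h)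

/-- For `w ≠ w'` in `F`, the subgroups `S_w` and `S_{w'}` are not conjugate
in `G`: there is no `g ∈ G` with `g⁻¹ S_w g = S_{w'}`. -/
theorem twisted_stmt12 {F : Type*} [Field F] [Fintype F] {f : ℕ} (hf : 2 ≤ f)
    (hF : Fintype.card F = 2 ^ f) (a : F) (ha : a ≠ 0)
    (hgen : orderOf a = 2 ^ f - 1) (b : F) (hb : b = (1 + a ^ 2)⁻¹)
    (w w' : F) (hw : w ≠ w') :
    ¬ ∃ g ∈ Gsub F a b,
      (fun x : Matrix.SpecialLinearGroup (Fin 3) F => g⁻¹ * x * g) ''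
          (Ssub F a b w : Set (Matrix.SpecialLinearGroup (Fin 3) F))
        = (Ssub F a b w' : Set (Matrix.SpecialLinearGroup (Fin 3) F)) := by
  rintro ⟨g, hgG, hconj⟩
  have := charP_two_of_card_eq_two_pow (by omega) hF
  have ha₂ : a ^ 2 ≠ 1 := by
    refine pow_ne_one_of_lt_orderOf two_ne_zero ?_
    have : 2 ^ 2 ≤ 2 ^ f := Nat.pow_le_pow_right two_pos hf
    omega
  have hA : 1 + a ^ 2 ≠ 0 := by rwa [ne_eq, CharTwo.add_eq_zero, eq_comm]
  have hb' : b * (1 + a ^ 2) = 1 := hb ▸ inv_mul_cancel₀ hA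
  have hS := Ssub_le_cocycleKernel hb'
  have conj_mem {s : SL(3, F)} (hs : s ∈ Ssub F a b w') : ∃ x ∈ Ssub F a b w, g⁻¹ * x * g = s :=
    (Set.ext_iff.mp hconj s).mpr hs
  let X : SL(3, F) := ⟨Xmat F a, det_Xmat ha⟩
  let Z : SL(3, F) := ⟨Zmat F a b w', det_Zmat a b w'⟩
  have hXS (u : F) : X ∈ Ssub F a b u := Subgroup.subset_closure (Or.inl rfl)
  have hZS : Z ∈ Ssub F a b w' := Subgroup.subset_closure (Or.inr (Or.inr rfl))
  obtain ⟨x, hx, hxX⟩ := conj_mem (hXS w')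
  have hgK : g ∈ cocycleKernel (w ^ 2 * (1 + a ^ 2)) :=
    mem_cocycleKernel_of_conj_eq_Xmat ha₂ (Gsub_le_firstColumnStabilizer a b hgG) (hS w hx)
      (hS w (hXS w)) rfl hxX
  obtain ⟨z, hz, hzZ⟩ := conj_mem hZS
  have hZw : Z ∈ cocycleKernel (w ^ 2 * (1 + a ^ 2)) :=
    hzZ ▸ mul_mem (mul_mem (inv_mem hgK) (hS w hz)) hgK
  have hc := eq_of_mem_cocycleKernel hZw (hS w' hZS) (j := 1)
    (by simpa [Z, Zmat] using left_ne_zero_of_mul_eq_one hb')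
  exact hw (CharTwo.sq_injective (mul_right_cancel₀ hA hc))
end

section
/- Let F be a finite field of characteristic 2 with |F| ≥ 4, and let t be an affine transformation of V = F² of the form t(v) = A·v + c with A ∈ SL(2,F) and c ∈ F², with t not the identity. If t fixes at least two points of V, then t fixes exactly |F| points of V and t∘t is the identity. -/
/-!
Write `N = A - 1`. If `v₀` is a fixed point of `t`, then `t v - v₀ = A (v - v₀)`, so the fixed
points form the coset `v₀ + ker N`. Two distinct fixed points make `ker N` nonzero, so
`det (A - 1) = 0`; together with `det A = 1` this forces `tr A = 2`, and Cayley–Hamilton gives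
`N² = 0`. Since `t ≠ id`, `N ≠ 0`, so `ker N` is a line and there are `|F|` fixed points.
In characteristic 2, `N² = 0` reads `A² = 1`, and then `t (t v) - v₀ = A² (v - v₀) = v - v₀`.
-/

open Matrix Module

namespace Matrix

section FinTwo

variable {R : Type*} [CommRing R]

theorem det_sub_one_fin_two (A : Matrix (Fin 2) (Fin 2) R) :
    (A - 1).det = A.det - A.trace + 1 := by
  simp [det_fin_two, trace_fin_two]
  ring

theorem sub_one_mul_self_eq_zero_of_det_eq_one_of_det_sub_one_eq_zero [Nontrivial R]
    {A : Matrix (Fin 2) (Fin 2) R} (hA : A.det = 1) (hA₁ : (A - 1).det = 0) :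
    (A - 1) * (A - 1) = 0 := by
  have htr : A.trace = 2 := by
    rw [det_sub_one_fin_two, hA] at hA₁
    linear_combination -hA₁
  have hCH := aeval_self_charpoly A
  rw [charpoly_fin_two, htr, hA] at hCH
  simp only [map_add, map_sub, map_pow, Polynomial.aeval_X, map_mul, map_one, map_ofNat] at hCH
  rw [← hCH]
  noncomm_ring

end FinTwo

section AffineFixedPoints

variable {R n : Type*} [CommRing R] [Fintype n] {A : Matrix n n R} {c v₀ : n → R}

theorem mulVec_add_sub_eq_mulVec_sub (h₀ : A *ᵥ v₀ + c = v₀) (v : n → R) :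
    A *ᵥ v + c - v₀ = A *ᵥ (v - v₀) := by
  rw [mulVec_sub]
  nth_rw 1 [← h₀]
  abel

theorem mulVec_add_eq_self_iff_sub_mem_ker [DecidableEq n] (h₀ : A *ᵥ v₀ + c = v₀) (v : n → R) :
    A *ᵥ v + c = v ↔ v - v₀ ∈ LinearMap.ker (A - 1).mulVecLin := by
  rw [LinearMap.mem_ker, mulVecLin_apply, sub_mulVec, one_mulVec, sub_eq_zero,
    ← mulVec_add_sub_eq_mulVec_sub h₀, sub_left_inj]

theorem natCard_setOf_mulVec_add_eq_self [DecidableEq n] (h₀ : A *ᵥ v₀ + c = v₀) :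
    Nat.card {v | A *ᵥ v + c = v} = Nat.card (LinearMap.ker (A - 1).mulVecLin) :=
  Nat.card_congr <| (Equiv.subRight v₀).subtypeEquiv (mulVec_add_eq_self_iff_sub_mem_ker h₀)

theorem mulVec_mulVec_add_add_eq_self [DecidableEq n] (h₀ : A *ᵥ v₀ + c = v₀) (hA : A * A = 1)
    (v : n → R) : A *ᵥ (A *ᵥ v + c) + c = v := by
  rw [← sub_left_inj (a := v₀), mulVec_add_sub_eq_mulVec_sub h₀, mulVec_add_sub_eq_mulVec_sub h₀,
    mulVec_mulVec, hA, one_mulVec]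

end AffineFixedPoints

end Matrix

theorem mul_self_eq_one_of_sub_one_mul_self_eq_zero {R : Type*} [Ring R] [CharP R 2] {a : R}
    (h : (a - 1) * (a - 1) = 0) : a * a = 1 := by
  rwa [CharTwo.sub_eq_add, mul_add, add_mul, mul_one, one_mul, add_assoc, ← add_assoc a,
    CharTwo.add_self_eq_zero, zero_add, CharTwo.add_eq_zero] at h

theorem LinearMap.finrank_ker_eq_one {K V W : Type*} [Field K] [AddCommGroup V] [Module K V]
    [AddCommGroup W] [Module K W] (hV : finrank K V = 2) {f : V →ₗ[K] W} (hf : f ≠ 0)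
    (hker : ker f ≠ ⊥) : finrank K (ker f) = 1 := by
  have : FiniteDimensional K V := .of_finrank_eq_succ hV
  have hrange : finrank K (range f) ≠ 0 := by rwa [Ne, Submodule.finrank_eq_zero, range_eq_bot]
  have hker' : finrank K (ker f) ≠ 0 := by rwa [Ne, Submodule.finrank_eq_zero]
  have := finrank_range_add_finrank_ker f
  omega

theorem twisted_stmt15_general {F : Type*} [Field F] [Fintype F] [CharP F 2]
    (A : Matrix (Fin 2) (Fin 2) F) (hA : A.det = 1) (c : Fin 2 → F)
    (hne : (fun v : Fin 2 → F => A.mulVec v + c) ≠ id)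
    (hfix : ∃ v₁ v₂ : Fin 2 → F, v₁ ≠ v₂ ∧
      A.mulVec v₁ + c = v₁ ∧ A.mulVec v₂ + c = v₂) :
    Nat.card {v : Fin 2 → F | A.mulVec v + c = v} = Fintype.card F ∧
    ∀ v : Fin 2 → F, A.mulVec (A.mulVec v + c) + c = v := by
  obtain ⟨v₁, v₂, h₁₂, h₁, h₂⟩ := hfix
  have hker : v₁ - v₂ ∈ LinearMap.ker (A - 1).mulVecLin :=
    (mulVec_add_eq_self_iff_sub_mem_ker h₂ v₁).mp h₁
  have hker_ne : LinearMap.ker (A - 1).mulVecLin ≠ ⊥ := fun h =>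
    sub_ne_zero.mpr h₁₂ <| (Submodule.mem_bot F).mp (h ▸ hker)
  have hdet : (A - 1).det = 0 := exists_mulVec_eq_zero_iff.mp ⟨v₁ - v₂, sub_ne_zero.mpr h₁₂, hker⟩
  have hN : (A - 1).mulVecLin ≠ 0 := fun h =>
    hne <| funext fun v => (mulVec_add_eq_self_iff_sub_mem_ker h₁ v).mpr (by simp [h])
  refine ⟨?_, mulVec_mulVec_add_add_eq_self h₁ <| mul_self_eq_one_of_sub_one_mul_self_eq_zero <|
    sub_one_mul_self_eq_zero_of_det_eq_one_of_det_sub_one_eq_zero hA hdet⟩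
  rw [natCard_setOf_mulVec_add_eq_self h₁, natCard_eq_pow_finrank (K := F),
    LinearMap.finrank_ker_eq_one (finrank_fin_fun F) hN hker_ne, pow_one, Nat.card_eq_fintype_card]

/-- Let `F` be a finite field of characteristic 2 with `|F| ≥ 4`, and let
`t(v) = A·v + c` with `A ∈ SL(2,F)`, `c ∈ F²`, and `t` not the identity. If `t` fixes at
least two points of `V = F²` then it fixes exactly `|F|` points and `t∘t = id`. -/
theorem twisted_stmt15 {F : Type*} [Field F] [Fintype F] [CharP F 2]
    (hcard : 4 ≤ Fintype.card F)
    (A : Matrix (Fin 2) (Fin 2) F) (hA : A.det = 1) (c : Fin 2 → F)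
    (hne : (fun v : Fin 2 → F => A.mulVec v + c) ≠ id)
    (hfix : ∃ v₁ v₂ : Fin 2 → F, v₁ ≠ v₂ ∧
      A.mulVec v₁ + c = v₁ ∧ A.mulVec v₂ + c = v₂) :
    Nat.card {v : Fin 2 → F | A.mulVec v + c = v} = Fintype.card F ∧
    ∀ v : Fin 2 → F, A.mulVec (A.mulVec v + c) + c = v :=
  twisted_stmt15_general A hA c hne hfix
end

section
/- Let F be a finite field of characteristic 2 with |F| ≥ 4, and let t be an affine transformation of V = F² of the form t(v) = A·v + c with A ∈ SL(2,F) and c ∈ F². If the order of t (as a permutation of V) is even and strictly greater than 2, then t has no fixed points in V. -/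
/-!
A fixed point `v` conjugates `t` to its linear part: `t^[m] w = A ^ m *ᵥ (w - v) + v`, so
`t` and `A` have the same order `n = 2k`. Then `B = A ^ k` is an involution other than `1`
commuting with `A`. In characteristic 2, Cayley–Hamilton `X ^ 2 = tr • X - det • 1` forces
`tr B = 0`, so `B` is a nontrivial transvection `!![p, q; r, p]`, and commuting with it forces
`A 0 0 = A 1 1`, i.e. `tr A = 0`. Cayley–Hamilton again gives `A ^ 2 = 1`, so `t` has order
at most 2.
-/

open Matrix

section AffineIterate

variable {n R : Type*} [Fintype n] [DecidableEq n] [CommRing R]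

theorem iterate_mulVec_add_of_fixed {A : Matrix n n R} {c v : n → R} (hv : A *ᵥ v + c = v)
    (m : ℕ) (w : n → R) :
    (fun u => A *ᵥ u + c)^[m] w = A ^ m *ᵥ (w - v) + v := by
  induction m with
  | zero => simp
  | succ m ih =>
    rw [Function.iterate_succ_apply', ih, mulVec_add, add_assoc, hv, mulVec_mulVec, ← pow_succ']

theorem iterate_mulVec_add_eq_id_iff {A : Matrix n n R} {c v : n → R} (hv : A *ᵥ v + c = v)
    (m : ℕ) : (fun u => A *ᵥ u + c)^[m] = id ↔ A ^ m = 1 := by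
  constructor
  · intro h
    refine mulVec_injective (funext fun u => ?_)
    simpa [iterate_mulVec_add_of_fixed hv] using congrFun h (u + v)
  · intro h
    funext w
    simp [iterate_mulVec_add_of_fixed hv, h]

end AffineIterate

namespace Matrix

variable {R : Type*} [CommRing R]

theorem sq_fin_two_eq_trace_smul_sub_det (A : Matrix (Fin 2) (Fin 2) R) :
    A ^ 2 = A.trace • A - A.det • 1 := by
  ext i j
  fin_cases i <;> fin_cases j <;>
    simp [sq, mul_apply, Fin.sum_univ_two, trace_fin_two, det_fin_two] <;> ring

variable [CharP R 2] {A B : Matrix (Fin 2) (Fin 2) R}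

theorem sq_eq_one_of_det_eq_one_of_trace_eq_zero (hdet : A.det = 1) (htr : A.trace = 0) :
    A ^ 2 = 1 := by
  rw [sq_fin_two_eq_trace_smul_sub_det, hdet, htr, zero_smul, one_smul, zero_sub, CharTwo.neg_eq]

variable [NoZeroDivisors R]

theorem trace_eq_zero_of_sq_eq_one (hB : B ^ 2 = 1) : B.trace = 0 := by
  have hdet : B.det = 1 := CharTwo.sq_injective (by simpa [det_pow] using congrArg det hB)
  have htrB : B.trace • B = 0 := by
    have := sq_fin_two_eq_trace_smul_sub_det B
    rwa [hB, hdet, one_smul, eq_sub_iff_add_eq, CharTwo.add_self_eq_zero, eq_comm] at this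
  have : B.trace • (1 : Matrix (Fin 2) (Fin 2) R) = 0 := by
    rw [← hB, sq, ← smul_mul_assoc, htrB, zero_mul]
  simpa using congrFun (congrFun this 0) 0

theorem trace_eq_zero_of_commute_of_sq_eq_one (hB : B ^ 2 = 1) (hB1 : B ≠ 1)
    (hAB : Commute A B) : A.trace = 0 := by
  have hdiag : B 0 0 = B 1 1 := by
    simpa [trace_fin_two, CharTwo.add_eq_zero] using trace_eq_zero_of_sq_eq_one hB
  have h01 : B 0 1 * (A 0 0 - A 1 1) = 0 := by
    have := congrFun (congrFun hAB.eq 0) 1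
    simp only [mul_apply, Fin.sum_univ_two] at this
    linear_combination this + A 0 1 * hdiag
  have h10 : B 1 0 * (A 0 0 - A 1 1) = 0 := by
    have := congrFun (congrFun hAB.eq 1) 0
    simp only [mul_apply, Fin.sum_univ_two] at this
    linear_combination -this + A 1 0 * hdiag
  rw [trace_fin_two, CharTwo.add_eq_zero]
  by_contra hA
  have hA' : A 0 0 - A 1 1 ≠ 0 := sub_ne_zero.mpr hA
  have h01' : B 0 1 = 0 := (mul_eq_zero.mp h01).resolve_right hA'
  have h10' : B 1 0 = 0 := (mul_eq_zero.mp h10).resolve_right hA'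
  have h00 : B 0 0 = 1 := CharTwo.sq_injective <| by
    simpa [sq, mul_apply, Fin.sum_univ_two, h01'] using congrFun (congrFun hB 0) 0
  refine hB1 (ext fun i j => ?_)
  fin_cases i <;> fin_cases j <;> simp [h00, ← hdiag, h01', h10']

end Matrix

theorem twisted_stmt18_general {F : Type*} [Field F] [CharP F 2]
    (A : Matrix (Fin 2) (Fin 2) F) (hA : A.det = 1) (c : Fin 2 → F)
    (n : ℕ)
    (hiter : (fun v : Fin 2 → F => A.mulVec v + c)^[n] = id)
    (hleast : ∀ m : ℕ, 0 < m → m < n →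
      (fun v : Fin 2 → F => A.mulVec v + c)^[m] ≠ id)
    (heven : Even n) (h2 : 2 < n) :
    {v : Fin 2 → F | A.mulVec v + c = v} = ∅ := by
  refine Set.eq_empty_iff_forall_notMem.mpr fun v (hv : A *ᵥ v + c = v) => ?_
  obtain ⟨k, rfl⟩ := heven
  have hAn : A ^ (k + k) = 1 := (iterate_mulVec_add_eq_id_iff hv _).mp hiter
  have hAk : A ^ k ≠ 1 := fun h =>
    hleast k (by omega) (by omega) ((iterate_mulVec_add_eq_id_iff hv k).mpr h)
  have htr : A.trace = 0 :=
    trace_eq_zero_of_commute_of_sq_eq_one (by rwa [← pow_mul, mul_two]) hAk (Commute.self_pow A k)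
  exact hleast 2 two_pos h2
    ((iterate_mulVec_add_eq_id_iff hv 2).mpr (sq_eq_one_of_det_eq_one_of_trace_eq_zero hA htr))

/-- Let `F` be a finite field of characteristic 2 with `|F| ≥ 4`, and let
`t(v) = A·v + c` with `A ∈ SL(2,F)` and `c ∈ F²`. If the order of `t` as a permutation of
`V = F²` (the least `n ≥ 1` with `t^[n] = id`) is even and strictly greater than `2`, then
`t` has no fixed points in `V`. -/
theorem twisted_stmt18 {F : Type*} [Field F] [Fintype F] [CharP F 2]
    (hcard : 4 ≤ Fintype.card F)
    (A : Matrix (Fin 2) (Fin 2) F) (hA : A.det = 1) (c : Fin 2 → F)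
    (n : ℕ) (hn : 0 < n)
    (hiter : (fun v : Fin 2 → F => A.mulVec v + c)^[n] = id)
    (hleast : ∀ m : ℕ, 0 < m → m < n →
      (fun v : Fin 2 → F => A.mulVec v + c)^[m] ≠ id)
    (heven : Even n) (h2 : 2 < n) :
    {v : Fin 2 → F | A.mulVec v + c = v} = ∅ :=
  twisted_stmt18_general A hA c n hiter hleast heven h2
end
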